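/- arXiv:1101.1683 — 8 statements merged into one kernel-verified Lean document; each statement's English description precedes it below -/
import Mathlib

section
/- Let (ν, P, P̃, U) ∈ K_d, let θ̃ be a nonzero complex number, R = θ̃ P̃ Uᵗ, and φ̃_i = R φ_i R^{-1}. Then for every i = 1, 2, ..., d one has the matrix identity φ̃_i = ν ∑_{0 ≤ k ≠ l ≤ d} p_i p̃_k u_{i,k} u_{i,l} e_{k,l} + ∑_{j=1}^{d} p_i (ν p̃_j u_{i,j}² − 1) φ_j. -/
/-!
Since `ν (P U)(P̃ Uᵗ) = 1`, conjugating `e_{i,i}` by `R` gives the rank-one matrix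
`M = (ν p_i p̃_k u_{i,k} u_{i,l})_{k,l}` of trace 1, and `φ̃_i = M - I/(d+1)`. Any matrix `M`
equals its off-diagonal part plus `∑_j M_{j,j} φ_j + (tr M/(d+1)) I`. As `∑_j φ_j = 0`, the
coefficients `M_{j,j}` may all be lowered by `p_i`, which kills the coefficient of `φ_0`
because `ν p̃_0 u_{i,0}² = 1`.
-/

open Matrix Finset

namespace Matrix

variable {ι K : Type*} [Fintype ι] [DecidableEq ι] [Field K]

def centeredSingle (j : ι) : Matrix ι ι K :=
  single j j 1 - (Fintype.card ι : K)⁻¹ • 1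

theorem sum_centeredSingle [Nonempty ι] [CharZero K] :
    ∑ j : ι, centeredSingle (K := K) j = 0 := by
  have hι : (Fintype.card ι : K) ≠ 0 := Nat.cast_ne_zero.2 Fintype.card_ne_zero
  simp only [centeredSingle, sum_sub_distrib, sum_single_one, sum_const, card_univ,
    ← Nat.cast_smul_eq_nsmul K, smul_smul, mul_inv_cancel₀ hι, one_smul, sub_self]

theorem sub_trace_div_card_smul_one (M : Matrix ι ι K) :
    M - (M.trace / Fintype.card ι) • 1 =
      ∑ k, ∑ l ∈ univ.erase k, M k l • single k l 1 + ∑ j, M j j • centeredSingle j := by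
  have hdiag : ∑ j, M j j • centeredSingle j
      = ∑ j, single j j (M j j) - (M.trace / Fintype.card ι) • 1 := by
    simp only [centeredSingle, smul_sub, sum_sub_distrib, smul_single, smul_eq_mul, mul_one,
      smul_smul, ← sum_smul, trace, diag_apply, div_eq_mul_inv, sum_mul]
  have hsplit :
      ∑ k, ∑ l ∈ univ.erase k, M k l • single k l 1 + ∑ j, single j j (M j j) = M := by
    rw [← sum_add_distrib]
    conv_rhs => rw [matrix_eq_sum_single M]
    refine sum_congr rfl fun k _ => ?_
    simp only [smul_single, smul_eq_mul, mul_one]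
    exact sum_erase_add _ _ (mem_univ k)
  rw [hdiag, ← add_sub_assoc, hsplit]

theorem smul_mul_mul_smul_inv {A B : Matrix ι ι K} (hAB : A * B = 1) {θ : K} (hθ : θ ≠ 0)
    (X : Matrix ι ι K) : θ • B * X * (θ • B)⁻¹ = B * X * A := by
  have hinv : (θ • B)⁻¹ = θ⁻¹ • A :=
    inv_eq_left_inv (by rw [smul_mul_smul_comm, inv_mul_cancel₀ hθ, one_smul, hAB])
  rw [hinv, smul_mul, smul_mul_smul_comm, mul_inv_cancel₀ hθ, one_smul]

theorem mul_single_mul_apply (A B : Matrix ι ι K) (i k l : ι) :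
    (B * single i i (1 : K) * A) k l = B k i * A i l := by
  simp [mul_apply, single, ite_and]

theorem trace_mul_single_mul (A B : Matrix ι ι K) (i : ι) :
    (B * single i i (1 : K) * A).trace = (A * B) i i := by
  rw [trace_mul_comm, ← Matrix.mul_assoc, trace_mul_single]
  simp

theorem smul_mul_centeredSingle_mul_smul_inv {A B : Matrix ι ι K} (hAB : A * B = 1) {θ : K}
    (hθ : θ ≠ 0) (i : ι) :
    θ • B * centeredSingle i * (θ • B)⁻¹
      = B * single i i 1 * A - ((B * single i i 1 * A).trace / (Fintype.card ι : K)) • 1 := by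
  rw [smul_mul_mul_smul_inv hAB hθ, trace_mul_single_mul, hAB, one_apply_eq, one_div,
    centeredSingle, Matrix.mul_sub, Matrix.sub_mul, Matrix.mul_smul, Matrix.smul_mul,
    Matrix.mul_one, mul_eq_one_comm.mp hAB]

end Matrix

theorem stmt_2_general (d : ℕ) (ν : ℂ) (hν : ν ≠ 0)
    (p pt : Fin (d+1) → ℂ) (U : Matrix (Fin (d+1)) (Fin (d+1)) ℂ)
    (hpt0 : pt 0 = 1/ν)
    (hU : ∀ j, U 0 j = 1 ∧ U j 0 = 1)
    (hK : ν • (Matrix.diagonal p * U * Matrix.diagonal pt * U.transpose) = 1)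
    (θt : ℂ) (hθt : θt ≠ 0) (R : Matrix (Fin (d+1)) (Fin (d+1)) ℂ)
    (hR : R = θt • (Matrix.diagonal pt * U.transpose))
    (e : Fin (d+1) → Fin (d+1) → Matrix (Fin (d+1)) (Fin (d+1)) ℂ)
    (he : ∀ i j, e i j = Matrix.single i j 1)
    (φ : Fin (d+1) → Matrix (Fin (d+1)) (Fin (d+1)) ℂ)
    (hφ : ∀ i, φ i = e i i - (((d : ℂ) + 1)⁻¹) • 1)
    (φt : Fin (d+1) → Matrix (Fin (d+1)) (Fin (d+1)) ℂ)
    (hφt : ∀ i, φt i = R * φ i * R⁻¹) :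
    ∀ i : Fin (d+1), i ≠ 0 →
      φt i = ν • (∑ k : Fin (d+1), ∑ l ∈ Finset.univ.erase k,
          (p i * pt k * U i k * U i l) • e k l)
        + ∑ j ∈ Finset.univ.erase (0 : Fin (d+1)),
            (p i * (ν * pt j * (U i j)^2 - 1)) • φ j := by
  intro i _
  subst hR
  obtain rfl : e = fun k l => single k l 1 := funext₂ he
  obtain rfl : φ = centeredSingle := funext fun j => by simp [hφ, centeredSingle]
  set A := ν • (diagonal p * U)
  set B := diagonal pt * Uᵀ
  have hAB : A * B = 1 := by simpa only [A, B, smul_mul, Matrix.mul_assoc] using hK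
  have hM : ∀ k l, (B * single i i (1 : ℂ) * A) k l = ν * (p i * pt k * U i k * U i l) :=
      fun k l => by
    simp only [A, B, mul_single_mul_apply, Matrix.smul_apply, diagonal_mul, transpose_apply]
    ring
  have hcoeff : ∀ j,
      p i * (ν * pt j * U i j ^ 2 - 1) = (B * single i i (1 : ℂ) * A) j j - p i :=
    fun j => by rw [hM]; ring
  have hcoeff0 : p i * (ν * pt 0 * U i 0 ^ 2 - 1) = 0 := by
    rw [hpt0, (hU i).2]; field_simp; ring
  rw [hφt, smul_mul_centeredSingle_mul_smul_inv hAB hθt, sub_trace_div_card_smul_one]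
  congr 1
  · simp only [smul_sum, hM, smul_smul]
  · rw [sum_erase _ (by rw [hcoeff0, zero_smul])]
    simp only [hcoeff, sub_smul, sum_sub_distrib, ← smul_sum, sum_centeredSingle, smul_zero,
      sub_zero]

theorem stmt_2 (d : ℕ) (hd : 1 ≤ d) (ν : ℂ) (hν : ν ≠ 0)
    (p pt : Fin (d+1) → ℂ) (U : Matrix (Fin (d+1)) (Fin (d+1)) ℂ)
    (hp0 : p 0 = 1/ν) (hpt0 : pt 0 = 1/ν)
    (hU : ∀ j, U 0 j = 1 ∧ U j 0 = 1)
    (hK : ν • (Matrix.diagonal p * U * Matrix.diagonal pt * U.transpose) = 1)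
    (θt : ℂ) (hθt : θt ≠ 0) (R : Matrix (Fin (d+1)) (Fin (d+1)) ℂ)
    (hR : R = θt • (Matrix.diagonal pt * U.transpose))
    (e : Fin (d+1) → Fin (d+1) → Matrix (Fin (d+1)) (Fin (d+1)) ℂ)
    (he : ∀ i j, e i j = Matrix.single i j 1)
    (φ : Fin (d+1) → Matrix (Fin (d+1)) (Fin (d+1)) ℂ)
    (hφ : ∀ i, φ i = e i i - (((d : ℂ) + 1)⁻¹) • 1)
    (φt : Fin (d+1) → Matrix (Fin (d+1)) (Fin (d+1)) ℂ)
    (hφt : ∀ i, φt i = R * φ i * R⁻¹) :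
    ∀ i : Fin (d+1), i ≠ 0 →
      φt i = ν • (∑ k : Fin (d+1), ∑ l ∈ Finset.univ.erase k,
          (p i * pt k * U i k * U i l) • e k l)
        + ∑ j ∈ Finset.univ.erase (0 : Fin (d+1)),
            (p i * (ν * pt j * (U i j)^2 - 1)) • φ j :=
  stmt_2_general d ν hν p pt U hpt0 hU hK θt hθt R hR e he φ hφ φt hφt
end

section
/- Let (ν, P, P̃, U) ∈ K_d, let θ̃ be a nonzero complex number, R = θ̃ P̃ Uᵗ, φ̃_j = R φ_j R^{-1} and ẽ_{k,l} = R e_{k,l} R^{-1}. Then for every i = 1, 2, ..., d one has the matrix identity φ_i = ν ∑_{0 ≤ k ≠ l ≤ d} p̃_i p_k u_{k,i} u_{l,i} ẽ_{k,l} + ∑_{j=1}^{d} p̃_i (ν p_j u_{j,i}² − 1) φ̃_j. -/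
/-!
Put `A = P̃ Uᵗ` and `B = ν P U`. The defining relation of `K_d` says `B A = 1`, hence `A B = 1`,
and conjugation by `R = θ̃ A` is `X ↦ A X B`. The coefficient `ν p̃_i p_k u_{k,i} u_{l,i}` is the
`(k,l)` entry of `D = B e_{i,i} A`, and summing `D_{k,l} ẽ_{k,l}` over all `k, l` gives
`A D B = e_{i,i}`. The diagonal terms are regrouped into the `φ̃_j`: since `∑_j φ̃_j = 0`, any
constant (here `p̃_i`) may be subtracted from their coefficients, and `trace D = 1` produces
exactly the scalar part of `φ_i`. The `j = 0` coefficient vanishes because `ν p_0 = 1` and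
`u_{0,i} = 1`.
-/

open Matrix Finset

namespace Matrix

variable {n K : Type*} [Fintype n] [DecidableEq n]

section CommRing

variable [CommRing K]

theorem mul_single_one_mul_apply (B A : Matrix n n K) (i k l : n) :
    (B * single i i 1 * A : Matrix n n K) k l = B k i * A i l := by
  rw [mul_apply, Finset.sum_eq_single i (fun j _ hj => by simp [hj]) (by simp)]
  simp

theorem sum_sum_smul_mul_single_mul (A B D : Matrix n n K) :
    ∑ k, ∑ l, D k l • (A * single k l 1 * B) = A * D * B := by
  conv_rhs => rw [matrix_eq_sum_single D]
  simp only [Matrix.mul_sum, Matrix.sum_mul]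
  refine sum_congr rfl fun k _ => sum_congr rfl fun l _ => ?_
  have hsingle : single k l (D k l) = D k l • single k l 1 := by
    rw [smul_single, smul_eq_mul, mul_one]
  rw [hsingle, Matrix.mul_smul, Matrix.smul_mul]

theorem sum_offDiag_add_sum_diag_conj {A B : Matrix n n K} (hAB : A * B = 1) (D : Matrix n n K)
    (c : K) :
    ∑ k, ∑ l ∈ univ.erase k, D k l • (A * single k l 1 * B)
        + ∑ j, D j j • (A * (single j j 1 - c • 1) * B)
      = A * D * B - (c * trace D) • 1 := by
  have hdiag : ∀ j, A * (single j j 1 - c • 1) * B = A * single j j 1 * B - c • 1 := by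
    intro j
    rw [Matrix.mul_sub, Matrix.sub_mul, Matrix.mul_smul, Matrix.smul_mul, mul_one, hAB]
  have hsplit : ∀ k, ∑ l, D k l • (A * single k l 1 * B)
      = ∑ l ∈ univ.erase k, D k l • (A * single k l 1 * B) + D k k • (A * single k k 1 * B) :=
    fun k => (sum_erase_add _ _ (mem_univ k)).symm
  simp only [← sum_sum_smul_mul_single_mul A B D, hsplit, sum_add_distrib, hdiag, smul_sub,
    sum_sub_distrib, smul_smul, trace, diag_apply, mul_comm c, Finset.sum_mul, Finset.sum_smul]
  abel

end CommRing

section Field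

variable [Field K]

theorem smul_mul_mul_inv_smul {A B : Matrix n n K} (hAB : A * B = 1) {θ : K} (hθ : θ ≠ 0)
    (X : Matrix n n K) : θ • A * X * (θ • A)⁻¹ = A * X * B := by
  have hinv : (θ • A)⁻¹ = θ⁻¹ • B :=
    inv_eq_right_inv (by rw [smul_mul_smul_comm, mul_inv_cancel₀ hθ, one_smul, hAB])
  rw [hinv, Matrix.smul_mul, Matrix.smul_mul, Matrix.mul_smul, smul_smul, mul_inv_cancel₀ hθ,
    one_smul]

theorem sum_single_sub_inv_card_smul_one [CharZero K] [Nonempty n] :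
    ∑ j : n, (single j j (1 : K) - (Fintype.card n : K)⁻¹ • 1) = 0 := by
  have hcard : (Fintype.card n : K) ≠ 0 := Nat.cast_ne_zero.mpr Fintype.card_ne_zero
  rw [sum_sub_distrib, sum_const, card_univ, ← Nat.cast_smul_eq_nsmul K, smul_smul,
    mul_inv_cancel₀ hcard, one_smul, sum_single_one, sub_self]

theorem single_sub_inv_card_smul_one_eq_sum_conj [CharZero K] [Nonempty n]
    {A B : Matrix n n K} (hAB : A * B = 1) (i : n) (w : K) :
    single i i 1 - (Fintype.card n : K)⁻¹ • 1
      = ∑ k, ∑ l ∈ univ.erase k, (B k i * A i l) • (A * single k l 1 * B)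
        + ∑ j, (B j i * A i j - w) • (A * (single j j 1 - (Fintype.card n : K)⁻¹ • 1) * B) := by
  set D := B * single i i 1 * A
  have htrace : trace D = 1 := by
    rw [trace_mul_cycle, hAB, Matrix.one_mul, trace_single_eq_same]
  have hADB : A * D * B = single i i 1 := by
    simp only [D, ← Matrix.mul_assoc, hAB, Matrix.one_mul]
    rw [Matrix.mul_assoc, hAB, Matrix.mul_one]
  have hw : ∑ j, w • (A * (single j j 1 - (Fintype.card n : K)⁻¹ • 1) * B) = 0 := by
    rw [← smul_sum, ← Matrix.sum_mul, ← Matrix.mul_sum, sum_single_sub_inv_card_smul_one,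
      Matrix.mul_zero, Matrix.zero_mul, smul_zero]
  simp only [← mul_single_one_mul_apply, sub_smul, sum_sub_distrib, hw, sub_zero]
  rw [sum_offDiag_add_sum_diag_conj hAB, hADB, htrace, mul_one]

end Field

end Matrix

theorem stmt_3_general (d : ℕ) (ν : ℂ) (hν : ν ≠ 0)
    (p pt : Fin (d+1) → ℂ) (U : Matrix (Fin (d+1)) (Fin (d+1)) ℂ)
    (hp0 : p 0 = 1/ν)
    (hU : ∀ j, U 0 j = 1 ∧ U j 0 = 1)
    (hK : ν • (Matrix.diagonal p * U * Matrix.diagonal pt * U.transpose) = 1)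
    (θt : ℂ) (hθt : θt ≠ 0) (R : Matrix (Fin (d+1)) (Fin (d+1)) ℂ)
    (hR : R = θt • (Matrix.diagonal pt * U.transpose))
    (e : Fin (d+1) → Fin (d+1) → Matrix (Fin (d+1)) (Fin (d+1)) ℂ)
    (he : ∀ i j, e i j = Matrix.single i j 1)
    (φ : Fin (d+1) → Matrix (Fin (d+1)) (Fin (d+1)) ℂ)
    (hφ : ∀ i, φ i = e i i - (((d : ℂ) + 1)⁻¹) • 1)
    (φt : Fin (d+1) → Matrix (Fin (d+1)) (Fin (d+1)) ℂ)
    (hφt : ∀ i, φt i = R * φ i * R⁻¹)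
    (et : Fin (d+1) → Fin (d+1) → Matrix (Fin (d+1)) (Fin (d+1)) ℂ)
    (het : ∀ i j, et i j = R * e i j * R⁻¹) :
    ∀ i : Fin (d+1), i ≠ 0 →
      φ i = ν • (∑ k : Fin (d+1), ∑ l ∈ Finset.univ.erase k,
          (pt i * p k * U k i * U l i) • et k l)
        + ∑ j ∈ Finset.univ.erase (0 : Fin (d+1)),
            (pt i * (ν * p j * (U j i)^2 - 1)) • φt j := by
  intro i _
  set A := diagonal pt * Uᵀ
  set B := ν • (diagonal p * U)
  have hAB : A * B = 1 := mul_eq_one_comm.mp (by rw [← hK, smul_mul, ← Matrix.mul_assoc])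
  have hA : ∀ k l, A k l = pt k * U l k := by simp [A, diagonal_mul]
  have hB : ∀ k l, B k l = ν * (p k * U k l) := by simp [B, diagonal_mul]
  have hconj : ∀ X, R * X * R⁻¹ = A * X * B := hR ▸ smul_mul_mul_inv_smul hAB hθt
  have key := single_sub_inv_card_smul_one_eq_sum_conj hAB i (pt i)
  rw [Fintype.card_fin, Nat.cast_add_one] at key
  rw [hφ, he, key]
  congr 1
  · simp only [smul_sum, smul_smul, het, hconj, he, hA, hB]
    refine sum_congr rfl fun k _ => sum_congr rfl fun l _ => ?_
    ring_nf
  · have hvanish : (B 0 i * A i 0 - pt i) • (A * (single 0 0 1 - ((d : ℂ) + 1)⁻¹ • 1) * B) = 0 := by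
      rw [hA, hB, hp0, (hU i).1, mul_one, mul_one, one_div, mul_inv_cancel₀ hν, one_mul,
        sub_self, zero_smul]
    rw [← add_sum_erase _ _ (mem_univ 0), hvanish, zero_add]
    refine sum_congr rfl fun j _ => ?_
    rw [hφt, hconj, hφ, he, hA, hB]
    ring_nf

theorem stmt_3 (d : ℕ) (hd : 1 ≤ d) (ν : ℂ) (hν : ν ≠ 0)
    (p pt : Fin (d+1) → ℂ) (U : Matrix (Fin (d+1)) (Fin (d+1)) ℂ)
    (hp0 : p 0 = 1/ν) (hpt0 : pt 0 = 1/ν)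
    (hU : ∀ j, U 0 j = 1 ∧ U j 0 = 1)
    (hK : ν • (Matrix.diagonal p * U * Matrix.diagonal pt * U.transpose) = 1)
    (θt : ℂ) (hθt : θt ≠ 0) (R : Matrix (Fin (d+1)) (Fin (d+1)) ℂ)
    (hR : R = θt • (Matrix.diagonal pt * U.transpose))
    (e : Fin (d+1) → Fin (d+1) → Matrix (Fin (d+1)) (Fin (d+1)) ℂ)
    (he : ∀ i j, e i j = Matrix.single i j 1)
    (φ : Fin (d+1) → Matrix (Fin (d+1)) (Fin (d+1)) ℂ)
    (hφ : ∀ i, φ i = e i i - (((d : ℂ) + 1)⁻¹) • 1)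
    (φt : Fin (d+1) → Matrix (Fin (d+1)) (Fin (d+1)) ℂ)
    (hφt : ∀ i, φt i = R * φ i * R⁻¹)
    (et : Fin (d+1) → Fin (d+1) → Matrix (Fin (d+1)) (Fin (d+1)) ℂ)
    (het : ∀ i j, et i j = R * e i j * R⁻¹) :
    ∀ i : Fin (d+1), i ≠ 0 →
      φ i = ν • (∑ k : Fin (d+1), ∑ l ∈ Finset.univ.erase k,
          (pt i * p k * U k i * U l i) • et k l)
        + ∑ j ∈ Finset.univ.erase (0 : Fin (d+1)),
            (pt i * (ν * p j * (U j i)^2 - 1)) • φt j :=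
  stmt_3_general d ν hν p pt U hp0 hU hK θt hθt R hR e he φ hφ φt hφt et het
end

section
/- Let (ν, P, P̃, U) ∈ K_d, let θ̃ be a nonzero complex number, R = θ̃ P̃ Uᵗ, φ̃_i = R φ_i R^{-1}, ẽ_{i,j} = R e_{i,j} R^{-1}, and define 𝔞(β) = P̃ βᵗ P̃^{-1} for a (d+1)×(d+1) complex matrix β. Then: 𝔞(φ_i) = φ_i and 𝔞(φ̃_i) = φ̃_i for all i = 1,...,d, and 𝔞(e_{i,j}) = (p̃_j/p̃_i) e_{j,i} and 𝔞(ẽ_{i,j}) = (p_j/p_i) ẽ_{j,i} for all 0 ≤ i ≠ j ≤ d. -/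
/-!
The relation `ν P U P̃ Uᵗ = 1` says that `R = θ̃ P̃ Uᵗ` has inverse `(ν / θ̃) P U`. Substituting this
into `𝔞(R β R⁻¹) = P̃ (R⁻¹)ᵗ βᵗ Rᵗ P̃⁻¹` gives `𝔞(R β R⁻¹) = R (P βᵗ P⁻¹) R⁻¹`: conjugation by `R`
intertwines `𝔞` with the analogous map for `P`. Both maps fix diagonal matrices and send `e_{i,j}`
to a multiple of `e_{j,i}`, which gives all four identities.
-/

open Matrix Finset

namespace Matrix

variable {n K : Type*} [Fintype n] [DecidableEq n] [Field K]

theorem inv_diagonal_of_ne_zero {v : n → K} (hv : ∀ i, v i ≠ 0) :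
    (diagonal v)⁻¹ = diagonal v⁻¹ :=
  inv_eq_right_inv <| by
    rw [diagonal_mul_diagonal, ← diagonal_one]
    exact congrArg diagonal (funext fun i => mul_inv_cancel₀ (hv i))

theorem diagonal_mul_single_mul_diagonal (v w : n → K) (i j : n) (c : K) :
    diagonal v * single i j c * diagonal w = single i j (v i * c * w j) := by
  ext a b
  by_cases hi : i = a <;> by_cases hj : j = b <;> simp [single, hi, hj]

noncomputable def diagonalTransposeConj (v : n → K) (β : Matrix n n K) : Matrix n n K :=
  diagonal v * βᵀ * (diagonal v)⁻¹

theorem diagonalTransposeConj_single {v : n → K} (hv : ∀ i, v i ≠ 0) (i j : n) (c : K) :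
    diagonalTransposeConj v (single i j c) = (v j / v i) • single j i c := by
  rw [diagonalTransposeConj, transpose_single, inv_diagonal_of_ne_zero hv,
    diagonal_mul_single_mul_diagonal, smul_single, smul_eq_mul, Pi.inv_apply]
  ring_nf

theorem diagonalTransposeConj_of_isDiag {v : n → K} (hv : ∀ i, v i ≠ 0) {A : Matrix n n K}
    (hA : A.IsDiag) : diagonalTransposeConj v A = A := by
  rw [diagonalTransposeConj, hA.isSymm.eq, inv_diagonal_of_ne_zero hv, ← hA.diagonal_diag,
    diagonal_mul_diagonal, diagonal_mul_diagonal]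
  congr 1
  funext i
  rw [Pi.inv_apply, mul_comm (v i), mul_inv_cancel_right₀ (hv i)]

section Intertwining

variable {ν θ : K} {p q : n → K} {U : Matrix n n K}

theorem ne_zero_of_smul_diagonal_mul_diagonal_mul_eq_one
    (hK : ν • (diagonal p * U * diagonal q * Uᵀ) = 1) : (∀ i, p i ≠ 0) ∧ ∀ i, q i ≠ 0 := by
  have hdet := congrArg det hK
  simp only [det_smul, det_mul, det_diagonal, det_one] at hdet
  constructor <;> intro i hi <;> simp [prod_eq_zero (mem_univ i) hi] at hdet

theorem inv_smul_diagonal_mul_transpose (hK : ν • (diagonal p * U * diagonal q * Uᵀ) = 1)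
    (hθ : θ ≠ 0) : (θ • (diagonal q * Uᵀ))⁻¹ = (ν / θ) • (diagonal p * U) := by
  refine inv_eq_right_inv ?_
  have hK' : (ν • (diagonal p * U)) * (diagonal q * Uᵀ) = 1 := by
    rw [smul_mul_assoc, ← mul_assoc, hK]
  rw [smul_mul_smul_comm, mul_div_cancel₀ _ hθ, ← mul_smul_comm]
  exact mul_eq_one_comm.mp hK'

theorem diagonalTransposeConj_conj (hK : ν • (diagonal p * U * diagonal q * Uᵀ) = 1)
    (hθ : θ ≠ 0) (β : Matrix n n K) :
    diagonalTransposeConj q (θ • (diagonal q * Uᵀ) * β * (θ • (diagonal q * Uᵀ))⁻¹) =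
      θ • (diagonal q * Uᵀ) * diagonalTransposeConj p β * (θ • (diagonal q * Uᵀ))⁻¹ := by
  obtain ⟨hp, hq⟩ := ne_zero_of_smul_diagonal_mul_diagonal_mul_eq_one hK
  rw [inv_smul_diagonal_mul_transpose hK hθ]
  have hq' : diagonal q * (diagonal q)⁻¹ = 1 :=
    mul_nonsing_inv _ (by simp [det_diagonal, prod_ne_zero_iff, hq])
  have hp' : (diagonal p)⁻¹ * diagonal p = 1 :=
    nonsing_inv_mul _ (by simp [det_diagonal, prod_ne_zero_iff, hp])
  calc _ = (ν / θ * θ) •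
        (diagonal q * Uᵀ * diagonal p * βᵀ * U * (diagonal q * (diagonal q)⁻¹)) := by
        simp only [diagonalTransposeConj, transpose_mul, transpose_smul, diagonal_transpose,
          transpose_transpose, smul_mul_assoc, mul_smul_comm, smul_smul, mul_assoc]
    _ = (ν / θ * θ) •
        (diagonal q * Uᵀ * diagonal p * βᵀ * ((diagonal p)⁻¹ * diagonal p) * U) := by
        rw [hq', hp', mul_one, mul_one]
    _ = _ := by
        simp only [diagonalTransposeConj, smul_mul_assoc, mul_smul_comm, smul_smul, mul_assoc]

end Intertwining

end Matrix

theorem stmt_4_general (d : ℕ) (ν : ℂ)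
    (p pt : Fin (d+1) → ℂ) (U : Matrix (Fin (d+1)) (Fin (d+1)) ℂ)
    (hK : ν • (Matrix.diagonal p * U * Matrix.diagonal pt * U.transpose) = 1)
    (θt : ℂ) (hθt : θt ≠ 0) (R : Matrix (Fin (d+1)) (Fin (d+1)) ℂ)
    (hR : R = θt • (Matrix.diagonal pt * U.transpose))
    (e : Fin (d+1) → Fin (d+1) → Matrix (Fin (d+1)) (Fin (d+1)) ℂ)
    (he : ∀ i j, e i j = Matrix.single i j 1)
    (φ : Fin (d+1) → Matrix (Fin (d+1)) (Fin (d+1)) ℂ)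
    (hφ : ∀ i, φ i = e i i - (((d : ℂ) + 1)⁻¹) • 1)
    (φt : Fin (d+1) → Matrix (Fin (d+1)) (Fin (d+1)) ℂ)
    (hφt : ∀ i, φt i = R * φ i * R⁻¹)
    (et : Fin (d+1) → Fin (d+1) → Matrix (Fin (d+1)) (Fin (d+1)) ℂ)
    (het : ∀ i j, et i j = R * e i j * R⁻¹)
    (a : Matrix (Fin (d+1)) (Fin (d+1)) ℂ → Matrix (Fin (d+1)) (Fin (d+1)) ℂ)
    (ha : ∀ β, a β = Matrix.diagonal pt * β.transpose * (Matrix.diagonal pt)⁻¹) :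
    (∀ i : Fin (d+1), i ≠ 0 → a (φ i) = φ i ∧ a (φt i) = φt i) ∧
    (∀ i j : Fin (d+1), i ≠ j →
      a (e i j) = (pt j / pt i) • e j i ∧ a (et i j) = (p j / p i) • et j i) := by
  obtain ⟨hp, hpt⟩ := ne_zero_of_smul_diagonal_mul_diagonal_mul_eq_one hK
  have hφ_isDiag : ∀ i, (φ i).IsDiag := fun i => by
    rw [hφ, he, ← diagonal_single]
    exact (isDiag_diagonal _).sub (isDiag_one.smul _)
  obtain rfl : a = diagonalTransposeConj pt := funext ha
  subst hR
  refine ⟨fun i _ => ⟨diagonalTransposeConj_of_isDiag hpt (hφ_isDiag i), ?_⟩,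
    fun i j _ => ⟨?_, ?_⟩⟩
  · rw [hφt, diagonalTransposeConj_conj hK hθt, diagonalTransposeConj_of_isDiag hp (hφ_isDiag i)]
  · rw [he, he, diagonalTransposeConj_single hpt]
  · rw [het, het, diagonalTransposeConj_conj hK hθt, he, he, diagonalTransposeConj_single hp,
      mul_smul_comm, smul_mul_assoc]

theorem stmt_4 (d : ℕ) (hd : 1 ≤ d) (ν : ℂ) (hν : ν ≠ 0)
    (p pt : Fin (d+1) → ℂ) (U : Matrix (Fin (d+1)) (Fin (d+1)) ℂ)
    (hp0 : p 0 = 1/ν) (hpt0 : pt 0 = 1/ν)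
    (hU : ∀ j, U 0 j = 1 ∧ U j 0 = 1)
    (hK : ν • (Matrix.diagonal p * U * Matrix.diagonal pt * U.transpose) = 1)
    (θt : ℂ) (hθt : θt ≠ 0) (R : Matrix (Fin (d+1)) (Fin (d+1)) ℂ)
    (hR : R = θt • (Matrix.diagonal pt * U.transpose))
    (e : Fin (d+1) → Fin (d+1) → Matrix (Fin (d+1)) (Fin (d+1)) ℂ)
    (he : ∀ i j, e i j = Matrix.single i j 1)
    (φ : Fin (d+1) → Matrix (Fin (d+1)) (Fin (d+1)) ℂ)
    (hφ : ∀ i, φ i = e i i - (((d : ℂ) + 1)⁻¹) • 1)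
    (φt : Fin (d+1) → Matrix (Fin (d+1)) (Fin (d+1)) ℂ)
    (hφt : ∀ i, φt i = R * φ i * R⁻¹)
    (et : Fin (d+1) → Fin (d+1) → Matrix (Fin (d+1)) (Fin (d+1)) ℂ)
    (het : ∀ i j, et i j = R * e i j * R⁻¹)
    (a : Matrix (Fin (d+1)) (Fin (d+1)) ℂ → Matrix (Fin (d+1)) (Fin (d+1)) ℂ)
    (ha : ∀ β, a β = Matrix.diagonal pt * β.transpose * (Matrix.diagonal pt)⁻¹) :
    (∀ i : Fin (d+1), i ≠ 0 → a (φ i) = φ i ∧ a (φt i) = φt i) ∧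
    (∀ i j : Fin (d+1), i ≠ j →
      a (e i j) = (pt j / pt i) • e j i ∧ a (et i j) = (p j / p i) • et j i) :=
  stmt_4_general d ν p pt U hK θt hθt R hR e he φ hφ φt hφt et het a ha
end

section
/- Let (ν, P, P̃, U) ∈ K_d, let θ̃ be a nonzero complex number, R = θ̃ P̃ Uᵗ, and set φ̃_0 = R e_{0,0} R^{-1} − (1/(d+1)) I_{d+1}. Then for all 0 ≤ i ≠ j ≤ d one has the matrix identity e_{i,j} = ( [φ_j, [φ_i, [φ_j, φ̃_0]]] − [φ_i, [φ_j, φ̃_0]] ) / (2 p̃_i), where [α, β] = αβ − βα. -/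
/-!
Conjugating `e₀₀` by `R = θ̃ P̃ Uᵗ` gives the rank-one matrix `(p̃ₐ)ₐ ⊗ (1, …, 1)`: the column of
`R` is `θ̃ p̃` because `U` has first row `1`, and since `p₀ = 1/ν` the row of `R⁻¹ = θ̃⁻¹ ν P U` is `θ̃⁻¹ (1, …, 1)`.
The scalar parts of `φᵢ, φⱼ, φ̃₀` drop out of every commutator, and for `i ≠ j` and any matrix
`M` the nested commutators with `eᵢᵢ, eⱼⱼ` isolate the entry `Mᵢⱼ`:
`[eⱼⱼ, [eᵢᵢ, [eⱼⱼ, M]]] - [eᵢᵢ, [eⱼⱼ, M]] = 2 Mᵢⱼ eᵢⱼ`.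
-/

open Matrix Finset

section Lie

variable {K A : Type*} [CommRing K] [Ring A] [Algebra K A]

lemma sub_smul_one_lie (a x : A) (c : K) : ⁅a - c • 1, x⁆ = ⁅a, x⁆ := by
  rw [Ring.lie_def, Ring.lie_def, sub_mul, mul_sub, smul_one_mul, mul_smul_one,
    sub_sub_sub_cancel_right]

lemma lie_sub_smul_one (x a : A) (c : K) : ⁅x, a - c • 1⁆ = ⁅x, a⁆ := by
  rw [Ring.lie_def, Ring.lie_def, sub_mul, mul_sub, smul_one_mul, mul_smul_one,
    sub_sub_sub_cancel_right]

end Lie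

namespace Matrix

variable {n α : Type*} [Fintype n] [DecidableEq n]

section Lie

variable [Ring α]

lemma single_lie_single_lie_single {i j : n} (hij : i ≠ j) (M : Matrix n n α) :
    ⁅single i i (1 : α), ⁅single j j (1 : α), M⁆⁆
      = -(M i j • single i j 1 + M j i • single j i 1) := by
  have hij' : single i i (1 : α) * single j j 1 = 0 := single_mul_single_of_ne _ _ _ _ hij _
  have hji' : single j j (1 : α) * single i i 1 = 0 := single_mul_single_of_ne _ _ _ _ hij.symm _
  simp only [Ring.lie_def, mul_sub, sub_mul, ← Matrix.mul_assoc, hij', zero_mul,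
    single_mul_mul_single, smul_single]
  rw [Matrix.mul_assoc M, hji', Matrix.mul_zero]
  simp only [one_mul, mul_one, smul_eq_mul]
  abel

lemma single_lie_single_lie_single_lie_single_sub {i j : n} (hij : i ≠ j) (M : Matrix n n α) :
    ⁅single j j (1 : α), ⁅single i i (1 : α), ⁅single j j (1 : α), M⁆⁆⁆
      - ⁅single i i (1 : α), ⁅single j j (1 : α), M⁆⁆ = (2 * M i j) • single i j 1 := by
  rw [single_lie_single_lie_single hij]
  simp only [Ring.lie_def, smul_single, smul_eq_mul, mul_one, mul_neg, neg_mul, mul_add, add_mul,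
    single_mul_single_same, single_mul_single_of_ne _ _ _ _ hij,
    single_mul_single_of_ne _ _ _ _ hij.symm, one_mul, two_mul, single_add]
  abel

end Lie

lemma mul_single_one_mul [Semiring α] (A B : Matrix n n α) (k l : n) :
    A * single k l 1 * B = vecMulVec (A.col k) (B.row l) := by
  rw [single_eq_single_vecMulVec_single, mul_vecMulVec, vecMulVec_mul, mulVec_single_one,
    single_one_vecMul]

lemma apply_ne_zero_of_diagonal_mul_eq_one [CommRing α] [Nontrivial α] {v : n → α}
    {B : Matrix n n α} (h : diagonal v * B = 1) (k : n) : v k ≠ 0 := by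
  have hdet := det_ne_zero_of_right_inverse h
  rw [det_diagonal] at hdet
  exact fun hk => hdet (prod_eq_zero (mem_univ k) hk)

lemma smul_diagonal_mul_transpose_conj_single {K : Type*} [Field K] {θ ν : K} (hθ : θ ≠ 0)
    (hν : ν ≠ 0) {p pt : n → K} {U : Matrix n n K} {o : n} (hp : p o = 1 / ν)
    (hU : ∀ j, U o j = 1) (h : diagonal pt * Uᵀ * (ν • (diagonal p * U)) = 1) :
    θ • (diagonal pt * Uᵀ) * single o o 1 * (θ • (diagonal pt * Uᵀ))⁻¹ = vecMulVec pt 1 := by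
  have hinv : (θ • (diagonal pt * Uᵀ))⁻¹ = (θ⁻¹ * ν) • (diagonal p * U) := by
    refine inv_eq_right_inv ?_
    rwa [smul_mul_smul_comm, mul_inv_cancel_left₀ hθ, ← mul_smul_comm]
  rw [hinv, mul_single_one_mul]
  ext a b
  simp only [vecMulVec_apply, col_apply, row_apply, smul_apply, diagonal_mul, transpose_apply,
    hU, hp, mul_one, smul_eq_mul, one_div, Pi.one_apply]
  field_simp

end Matrix

theorem stmt_6_general (d : ℕ) (ν : ℂ) (hν : ν ≠ 0)
    (p pt : Fin (d+1) → ℂ) (U : Matrix (Fin (d+1)) (Fin (d+1)) ℂ)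
    (hp0 : p 0 = 1/ν)
    (hU : ∀ j, U 0 j = 1 ∧ U j 0 = 1)
    (hK : ν • (Matrix.diagonal p * U * Matrix.diagonal pt * U.transpose) = 1)
    (θt : ℂ) (hθt : θt ≠ 0) (R : Matrix (Fin (d+1)) (Fin (d+1)) ℂ)
    (hR : R = θt • (Matrix.diagonal pt * U.transpose))
    (e : Fin (d+1) → Fin (d+1) → Matrix (Fin (d+1)) (Fin (d+1)) ℂ)
    (he : ∀ i j, e i j = Matrix.single i j 1)
    (φ : Fin (d+1) → Matrix (Fin (d+1)) (Fin (d+1)) ℂ)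
    (hφ : ∀ i, φ i = e i i - (((d : ℂ) + 1)⁻¹) • 1)
    (φt0 : Matrix (Fin (d+1)) (Fin (d+1)) ℂ)
    (hφt0 : φt0 = R * e 0 0 * R⁻¹ - (((d : ℂ) + 1)⁻¹) • 1)
    (br : Matrix (Fin (d+1)) (Fin (d+1)) ℂ → Matrix (Fin (d+1)) (Fin (d+1)) ℂ →
      Matrix (Fin (d+1)) (Fin (d+1)) ℂ)
    (hbr : ∀ α β, br α β = α * β - β * α) :
    ∀ i j : Fin (d+1), i ≠ j →
      e i j = (2 * pt i)⁻¹ •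
        (br (φ j) (br (φ i) (br (φ j) φt0)) - br (φ i) (br (φ j) φt0)) := by
  intro i j hij
  have hRinv : diagonal pt * Uᵀ * (ν • (diagonal p * U)) = 1 :=
    mul_eq_one_comm.mp (by rwa [smul_mul_assoc, ← Matrix.mul_assoc])
  have hpt : pt i ≠ 0 :=
    apply_ne_zero_of_diagonal_mul_eq_one (by rwa [Matrix.mul_assoc] at hRinv) i
  have hconj : R * e 0 0 * R⁻¹ = vecMulVec pt 1 := by
    rw [hR, he]
    exact smul_diagonal_mul_transpose_conj_single hθt hν hp0 (fun j => (hU j).1) hRinv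
  have hbrφ (k : Fin (d+1)) (X : Matrix (Fin (d+1)) (Fin (d+1)) ℂ) :
      br (φ k) X = ⁅single k k (1 : ℂ), X⁆ := by
    rw [hbr, ← Ring.lie_def, hφ, he, sub_smul_one_lie]
  have hbrφt0 : br (φ j) φt0 = ⁅single j j (1 : ℂ), vecMulVec pt 1⁆ := by
    rw [hbrφ, hφt0, hconj, lie_sub_smul_one]
  rw [hbrφt0, hbrφ, hbrφ, single_lie_single_lie_single_lie_single_sub hij, smul_smul,
    vecMulVec_apply, Pi.one_apply, mul_one, inv_mul_cancel₀ (mul_ne_zero two_ne_zero hpt),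
    one_smul, he]

theorem stmt_6 (d : ℕ) (hd : 1 ≤ d) (ν : ℂ) (hν : ν ≠ 0)
    (p pt : Fin (d+1) → ℂ) (U : Matrix (Fin (d+1)) (Fin (d+1)) ℂ)
    (hp0 : p 0 = 1/ν) (hpt0 : pt 0 = 1/ν)
    (hU : ∀ j, U 0 j = 1 ∧ U j 0 = 1)
    (hK : ν • (Matrix.diagonal p * U * Matrix.diagonal pt * U.transpose) = 1)
    (θt : ℂ) (hθt : θt ≠ 0) (R : Matrix (Fin (d+1)) (Fin (d+1)) ℂ)
    (hR : R = θt • (Matrix.diagonal pt * U.transpose))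
    (e : Fin (d+1) → Fin (d+1) → Matrix (Fin (d+1)) (Fin (d+1)) ℂ)
    (he : ∀ i j, e i j = Matrix.single i j 1)
    (φ : Fin (d+1) → Matrix (Fin (d+1)) (Fin (d+1)) ℂ)
    (hφ : ∀ i, φ i = e i i - (((d : ℂ) + 1)⁻¹) • 1)
    (φt0 : Matrix (Fin (d+1)) (Fin (d+1)) ℂ)
    (hφt0 : φt0 = R * e 0 0 * R⁻¹ - (((d : ℂ) + 1)⁻¹) • 1)
    (br : Matrix (Fin (d+1)) (Fin (d+1)) ℂ → Matrix (Fin (d+1)) (Fin (d+1)) ℂ →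
      Matrix (Fin (d+1)) (Fin (d+1)) ℂ)
    (hbr : ∀ α β, br α β = α * β - β * α) :
    ∀ i j : Fin (d+1), i ≠ j →
      e i j = (2 * pt i)⁻¹ •
        (br (φ j) (br (φ i) (br (φ j) φt0)) - br (φ i) (br (φ j) φt0)) :=
  stmt_6_general d ν hν p pt U hp0 hU hK θt hθt R hR e he φ hφ φt0 hφt0 br hbr
end

section
/- Let (ν, P, P̃, U) ∈ K_d, let θ̃ be a nonzero complex number, θ = ν/θ̃, fix a positive integer N, and define x̃_k = θ̃ ∑_{j=0}^{d} p̃_j u_{k,j} x_j for k = 0,...,d. Then for all n, m ∈ I: ⟨x̃^n, x̃^m⟩ = δ_{n,m} θ̃^N n!/p^n, where x̃^n = ∏_{k=0}^d x̃_k^{n_k} and p^n = ∏_{i=0}^d p_i^{n_i}. -/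
open Matrix Finset MvPolynomial

/-- The bilinear form on polynomials determined by
`⟨x^n, x^m⟩ = δ_{n,m} θ^N n! / p̃^n`. -/
noncomputable def bform (d N : ℕ) (θ : ℂ) (pt : Fin (d+1) → ℂ)
    (f g : MvPolynomial (Fin (d+1)) ℂ) : ℂ :=
  ∑ n ∈ f.support,
    f.coeff n * g.coeff n * θ ^ N * (∏ i, ((n i).factorial : ℂ)) / ∏ i, pt i ^ n i

/-!
For this form, multiplication by `X i` is adjoint to `(θ / p̃ i) ∂ᵢ` (lowering `N` by one), so
multiplication by `x̃ k` is adjoint to the constant-coefficient derivation `D k = ν ∑ⱼ U k j ∂ⱼ`.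
The relation `ν P U P̃ Uᵀ = 1` says precisely that `D k (x̃ l) = δ k l θ̃ / p k`, i.e. `D k` acts
as `(θ̃ / p k) ∂/∂x̃ₖ`. Moving one factor `x̃ k` of `x̃ ^ n` across the form then gives the claim
by induction on `N`.
-/

open scoped Nat

section MultiIndex

variable {ι M : Type*} [DecidableEq ι]

theorem exists_eq_add_single {n : ι → ℕ} {k : ι} (hk : n k ≠ 0) :
    ∃ n', n = n' + (Pi.single k 1 : ι → ℕ) := by
  refine ⟨Function.update n k (n k - 1), funext fun l => ?_⟩
  rcases eq_or_ne l k with rfl | hl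
  · simp; omega
  · simp [hl]

variable [Fintype ι] [CommMonoid M]

theorem prod_add_single_apply (g : ι → ℕ → M) (n : ι → ℕ) (k : ι) :
    ∏ l, g l ((n + Pi.single k 1 : ι → ℕ) l) = g k (n k + 1) * ∏ l ∈ univ.erase k, g l (n l) := by
  rw [← mul_prod_erase univ _ (mem_univ k)]
  congr 1
  · simp
  · refine prod_congr rfl fun l hl => ?_
    simp [(mem_erase.mp hl).1]

theorem prod_pow_add_single (x : ι → M) (n : ι → ℕ) (k : ι) :
    ∏ l, x l ^ (n + Pi.single k 1 : ι → ℕ) l = x k * ∏ l, x l ^ n l := by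
  rw [prod_add_single_apply (fun l a => x l ^ a), ← mul_prod_erase univ _ (mem_univ k), pow_succ',
    mul_assoc]

theorem prod_factorial_add_single {R : Type*} [CommSemiring R] (n : ι → ℕ) (k : ι) :
    ∏ l, (((n + Pi.single k 1 : ι → ℕ) l)! : R) = (n k + 1) * ∏ l, ((n l)! : R) := by
  rw [prod_add_single_apply (fun _ a => (a ! : R)), ← mul_prod_erase univ _ (mem_univ k),
    Nat.factorial_succ]
  push_cast
  ring

theorem sum_add_single (n : ι → ℕ) (k : ι) :
    ∑ l, (n + Pi.single k 1 : ι → ℕ) l = ∑ l, n l + 1 := by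
  simp [sum_add_distrib]

end MultiIndex

section Derivation

variable {R A ι : Type*} [CommSemiring R] [CommSemiring A] [Algebra R A]
  (D : Derivation R A A)

theorem Derivation.map_prod_eq_zero {s : Finset ι} {f : ι → A} (hf : ∀ l ∈ s, D (f l) = 0) :
    D (∏ l ∈ s, f l) = 0 := by
  classical
  induction s using Finset.induction_on with
  | empty => simp
  | insert a s ha ih =>
    rw [prod_insert ha, D.leibniz, hf a (mem_insert_self a s),
      ih fun l hl => hf l (mem_insert_of_mem hl), smul_zero, smul_zero, add_zero]

variable [Fintype ι] [DecidableEq ι] {y : ι → A} {k : ι}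

theorem Derivation.map_prod_pow_erase (hy : ∀ l ≠ k, D (y l) = 0) (n : ι → ℕ) :
    D (∏ l ∈ univ.erase k, y l ^ n l) = 0 :=
  D.map_prod_eq_zero fun l hl => by
    rw [D.leibniz_pow, hy l (mem_erase.mp hl).1, smul_zero, smul_zero]

theorem Derivation.map_prod_pow_of_eq_zero (hy : ∀ l ≠ k, D (y l) = 0) {n : ι → ℕ}
    (hn : n k = 0) : D (∏ l, y l ^ n l) = 0 := by
  rw [← mul_prod_erase univ _ (mem_univ k), hn, pow_zero, one_mul, D.map_prod_pow_erase hy]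

theorem Derivation.map_prod_pow_add_single (hy : ∀ l ≠ k, D (y l) = 0) (n : ι → ℕ) :
    D (∏ l, y l ^ (n + Pi.single k 1 : ι → ℕ) l) = (n k + 1) • D (y k) * ∏ l, y l ^ n l := by
  rw [prod_add_single_apply (fun l a => y l ^ a), D.leibniz, D.map_prod_pow_erase hy,
    D.leibniz_pow, ← mul_prod_erase univ _ (mem_univ k)]
  simp only [smul_eq_mul, nsmul_eq_mul, Nat.add_sub_cancel]
  ring

end Derivation

section MatrixIdentity

variable {m n R : Type*} [Fintype n] [DecidableEq n]

theorem Matrix.ne_zero_of_mul_diagonal_mul_eq_one [CommRing R] [Nontrivial R]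
    {A B : Matrix n n R} {v : n → R} (h : A * diagonal v * B = 1) (j : n) : v j ≠ 0 := by
  intro hj
  have hdet := congrArg det h
  rw [det_mul, det_mul, det_diagonal, prod_eq_zero (mem_univ j) hj, mul_zero, zero_mul,
    det_one] at hdet
  exact zero_ne_one hdet

theorem Matrix.diagonal_mul_mul_diagonal_mul_transpose_apply [Fintype m] [DecidableEq m]
    [CommSemiring R] (a : m → R) (U : Matrix m n R) (b : n → R) (k l : m) :
    (diagonal a * U * diagonal b * Uᵀ) k l = a k * ∑ j, U k j * b j * U l j := by
  rw [mul_apply, mul_sum]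
  simp only [mul_diagonal, diagonal_mul, transpose_apply, mul_assoc]

end MatrixIdentity

section BilinearForm

variable {d N : ℕ} {θ : ℂ} {pt : Fin (d+1) → ℂ}

theorem bform_eq_sum_of_support_subset {f : MvPolynomial (Fin (d+1)) ℂ}
    (g : MvPolynomial (Fin (d+1)) ℂ) {S : Finset (Fin (d+1) →₀ ℕ)} (hS : f.support ⊆ S) :
    bform d N θ pt f g =
      ∑ n ∈ S, f.coeff n * g.coeff n * θ ^ N * (∏ i, ((n i)! : ℂ)) / ∏ i, pt i ^ n i :=
  sum_subset hS fun n _ hn => by simp [notMem_support_iff.mp hn]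

theorem bform_sum_smul_left {κ : Type*} (s : Finset κ) (c : κ → ℂ)
    (f : κ → MvPolynomial (Fin (d+1)) ℂ) (g : MvPolynomial (Fin (d+1)) ℂ) :
    bform d N θ pt (∑ j ∈ s, c j • f j) g = ∑ j ∈ s, c j * bform d N θ pt (f j) g := by
  classical
  set S := s.biUnion fun j => (f j).support
  have hS : ∀ j ∈ s, (f j).support ⊆ S := fun j hj =>
    subset_biUnion_of_mem (fun j => (f j).support) hj
  calc bform d N θ pt (∑ j ∈ s, c j • f j) g
      = ∑ j ∈ s, c j * ∑ n ∈ S,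
          (f j).coeff n * g.coeff n * θ ^ N * (∏ i, ((n i)! : ℂ)) / ∏ i, pt i ^ n i := by
        rw [bform_eq_sum_of_support_subset g
          (support_sum.trans (biUnion_mono fun j _ => support_smul))]
        simp only [coeff_sum, coeff_smul, smul_eq_mul, mul_sum, sum_mul, sum_div]
        rw [sum_comm]
        exact sum_congr rfl fun n _ => sum_congr rfl fun j _ => by ring
    _ = _ := sum_congr rfl fun j hj => by rw [bform_eq_sum_of_support_subset g (hS j hj)]

theorem bform_sum_smul_right {κ : Type*} (s : Finset κ) (c : κ → ℂ)
    (f : MvPolynomial (Fin (d+1)) ℂ) (g : κ → MvPolynomial (Fin (d+1)) ℂ) :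
    bform d N θ pt f (∑ j ∈ s, c j • g j) = ∑ j ∈ s, c j * bform d N θ pt f (g j) := by
  simp only [bform, coeff_sum, coeff_smul, smul_eq_mul, mul_sum, sum_mul, sum_div]
  rw [sum_comm]
  exact sum_congr rfl fun j _ => sum_congr rfl fun n _ => by ring

theorem bform_smul_right (c : ℂ) (f g : MvPolynomial (Fin (d+1)) ℂ) :
    bform d N θ pt f (c • g) = c * bform d N θ pt f g := by
  simpa using bform_sum_smul_right (N := N) (θ := θ) (pt := pt) {()} (fun _ => c) f fun _ => g

theorem bform_zero_right (f : MvPolynomial (Fin (d+1)) ℂ) : bform d N θ pt f 0 = 0 := by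
  simp [bform]

theorem bform_one_one : bform d 0 θ pt 1 1 = 1 := by
  simp [bform_eq_sum_of_support_subset 1 support_one.subset]

theorem bform_X_mul {i : Fin (d+1)} (hpt : pt i ≠ 0) (f g : MvPolynomial (Fin (d+1)) ℂ) :
    bform d (N+1) θ pt (X i * f) g = θ / pt i * bform d N θ pt f (pderiv i g) := by
  rw [bform, support_X_mul, sum_map, bform, mul_sum]
  refine sum_congr rfl fun m _ => ?_
  have hm : ⇑(Finsupp.single i 1 + m : Fin (d+1) →₀ ℕ) = ⇑m + Pi.single i 1 := by
    rw [add_comm (Finsupp.single i 1) m, Finsupp.coe_add, Finsupp.single_eq_pi_single]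
  simp only [addLeftEmbedding_apply, hm, prod_factorial_add_single, prod_pow_add_single,
    coeff_X_mul, coeff_pderiv, add_comm m]
  field_simp
  ring

end BilinearForm

section DirectionalDerivative

variable {σ R : Type*} [CommSemiring R] [Fintype σ]

noncomputable def directionalPDeriv (v : σ → R) :
    Derivation R (MvPolynomial σ R) (MvPolynomial σ R) :=
  ∑ j, v j • pderiv j

theorem directionalPDeriv_apply (v : σ → R) (f : MvPolynomial σ R) :
    directionalPDeriv v f = ∑ j, v j • pderiv j f := by
  rw [directionalPDeriv, ← Derivation.coeFnAddMonoidHom_apply, map_sum, Finset.sum_apply]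
  rfl

theorem directionalPDeriv_sum_C_mul_X [DecidableEq σ] (v a : σ → R) :
    directionalPDeriv v (∑ j, C (a j) * X j) = C (∑ j, v j * a j) := by
  simp [directionalPDeriv_apply, pderiv_X, Pi.single_apply, C_mul', mul_comm]

end DirectionalDerivative

section ChangeOfVariables

variable {d N : ℕ} {ν θ θt : ℂ} {p pt : Fin (d+1) → ℂ} {U : Matrix (Fin (d+1)) (Fin (d+1)) ℂ}
  {xt : Fin (d+1) → MvPolynomial (Fin (d+1)) ℂ}

theorem bform_C_mul_sum_C_mul_X_mul (hpt : ∀ j, pt j ≠ 0) (c : ℂ) (a : Fin (d+1) → ℂ)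
    (f g : MvPolynomial (Fin (d+1)) ℂ) :
    bform d (N+1) θ pt ((C c * ∑ j, C (pt j * a j) * X j) * f) g
      = bform d N θ pt f (directionalPDeriv (fun j => c * θ * a j) g) := by
  have hlin : (C c * ∑ j, C (pt j * a j) * X j) * f = ∑ j, (c * (pt j * a j)) • (X j * f) := by
    simp only [mul_sum, sum_mul, C_mul', smul_mul_assoc, smul_smul]
  rw [hlin, bform_sum_smul_left, directionalPDeriv_apply, bform_sum_smul_right]
  refine sum_congr rfl fun j _ => ?_
  rw [bform_X_mul (hpt j)]
  field_simp [hpt j]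

theorem bform_xt_mul (hθt : θt ≠ 0) (hθ : θ = ν / θt) (hpt : ∀ j, pt j ≠ 0)
    (hxt : ∀ k, xt k = C θt * ∑ j, C (pt j * U k j) * X j) (k : Fin (d+1))
    (f g : MvPolynomial (Fin (d+1)) ℂ) :
    bform d (N+1) θ pt (xt k * f) g = bform d N θ pt f (directionalPDeriv (ν • U k) g) := by
  rw [hxt, bform_C_mul_sum_C_mul_X_mul hpt]
  congr
  ext j
  simp only [hθ, Pi.smul_apply, smul_eq_mul]
  field_simp

theorem directionalPDeriv_xt
    (horth : ∀ k l, ν * p k * ∑ j, U k j * pt j * U l j = if k = l then 1 else 0)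
    (hxt : ∀ k, xt k = C θt * ∑ j, C (pt j * U k j) * X j) (k l : Fin (d+1)) :
    directionalPDeriv (ν • U k) (xt l) = if k = l then C (θt / p k) else 0 := by
  have hpk : p k ≠ 0 := fun h => by simpa [h] using horth k k
  have hsum : ∑ j, (ν • U k) j * (pt j * U l j) = (if k = l then 1 else 0) / p k := by
    rw [eq_div_iff hpk, ← horth k l]
    simp only [Pi.smul_apply, smul_eq_mul, mul_sum, sum_mul]
    exact sum_congr rfl fun j _ => by ring
  rw [hxt, C_mul', Derivation.map_smul, directionalPDeriv_sum_C_mul_X, hsum, ← C_mul']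
  split_ifs <;> simp [div_eq_mul_inv]

theorem directionalPDeriv_prod_pow_xt_of_eq_zero
    (horth : ∀ k l, ν * p k * ∑ j, U k j * pt j * U l j = if k = l then 1 else 0)
    (hxt : ∀ k, xt k = C θt * ∑ j, C (pt j * U k j) * X j) {k : Fin (d+1)}
    {m : Fin (d+1) → ℕ} (hmk : m k = 0) :
    directionalPDeriv (ν • U k) (∏ l, xt l ^ m l) = 0 :=
  Derivation.map_prod_pow_of_eq_zero _
    (fun l hl => by simp [directionalPDeriv_xt horth hxt, Ne.symm hl]) hmk

theorem directionalPDeriv_prod_pow_xt_add_single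
    (horth : ∀ k l, ν * p k * ∑ j, U k j * pt j * U l j = if k = l then 1 else 0)
    (hxt : ∀ k, xt k = C θt * ∑ j, C (pt j * U k j) * X j) (k : Fin (d+1))
    (m : Fin (d+1) → ℕ) :
    directionalPDeriv (ν • U k) (∏ l, xt l ^ (m + Pi.single k 1 : Fin (d+1) → ℕ) l)
      = ((m k + 1) * (θt / p k)) • ∏ l, xt l ^ m l := by
  rw [Derivation.map_prod_pow_add_single _
      (fun l hl => by simp [directionalPDeriv_xt horth hxt, Ne.symm hl]),
    directionalPDeriv_xt horth hxt, if_pos rfl, smul_mul_assoc, C_mul',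
    ← Nat.cast_smul_eq_nsmul ℂ, smul_smul]
  push_cast
  rfl

theorem bform_prod_pow_xt (hθt : θt ≠ 0) (hθ : θ = ν / θt) (hpt : ∀ j, pt j ≠ 0)
    (horth : ∀ k l, ν * p k * ∑ j, U k j * pt j * U l j = if k = l then 1 else 0)
    (hxt : ∀ k, xt k = C θt * ∑ j, C (pt j * U k j) * X j)
    {n m : Fin (d+1) → ℕ} (hn : ∑ i, n i = N) (hm : ∑ i, m i = N) :
    bform d N θ pt (∏ k, xt k ^ n k) (∏ k, xt k ^ m k)
      = if n = m then θt ^ N * (∏ i, ((n i)! : ℂ)) / ∏ i, p i ^ n i else 0 := by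
  induction N generalizing n m with
  | zero =>
    obtain rfl : n = 0 := funext fun i => sum_eq_zero_iff.mp hn i (mem_univ i)
    obtain rfl : m = 0 := funext fun i => sum_eq_zero_iff.mp hm i (mem_univ i)
    simp [bform_one_one]
  | succ N ih =>
    obtain ⟨k, hk⟩ : ∃ k, n k ≠ 0 := by
      by_contra! h
      simp [h] at hn
    obtain ⟨n, rfl⟩ := exists_eq_add_single hk
    rw [prod_pow_add_single, bform_xt_mul hθt hθ hpt hxt]
    by_cases hmk : m k = 0
    · have hne : n + Pi.single k 1 ≠ m := fun h => hk (by rw [h]; exact hmk)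
      rw [directionalPDeriv_prod_pow_xt_of_eq_zero horth hxt hmk, bform_zero_right, if_neg hne]
    obtain ⟨m, rfl⟩ := exists_eq_add_single hmk
    rw [sum_add_single] at hn hm
    rw [directionalPDeriv_prod_pow_xt_add_single horth hxt, bform_smul_right,
      ih (by omega) (by omega)]
    by_cases hnm : n = m
    · subst hnm
      rw [if_pos rfl, if_pos rfl, prod_factorial_add_single, prod_pow_add_single]
      field_simp
      ring
    · rw [if_neg hnm, if_neg fun h => hnm (add_right_cancel h), mul_zero]

end ChangeOfVariables

theorem stmt_8_general (d : ℕ) (ν : ℂ)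
    (p pt : Fin (d+1) → ℂ) (U : Matrix (Fin (d+1)) (Fin (d+1)) ℂ)
    (hK : ν • (Matrix.diagonal p * U * Matrix.diagonal pt * U.transpose) = 1)
    (θt : ℂ) (hθt : θt ≠ 0) (θ : ℂ) (hθ : θ = ν / θt)
    (N : ℕ)
    (xt : Fin (d+1) → MvPolynomial (Fin (d+1)) ℂ)
    (hxt : ∀ k, xt k = C θt * ∑ j, C (pt j * U k j) * X j)
    (n m : Fin (d+1) → ℕ) (hn : ∑ i, n i = N) (hm : ∑ i, m i = N) :
    bform d N θ pt (∏ k, xt k ^ n k) (∏ k, xt k ^ m k)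
      = if n = m then θt ^ N * (∏ i, ((n i).factorial : ℂ)) / ∏ i, p i ^ n i
        else 0 := by
  have hpt : ∀ j, pt j ≠ 0 := by
    refine Matrix.ne_zero_of_mul_diagonal_mul_eq_one (A := ν • (diagonal p * U)) (B := Uᵀ) ?_
    simpa only [smul_mul_assoc] using hK
  have horth : ∀ k l, ν * p k * ∑ j, U k j * pt j * U l j = if k = l then 1 else 0 := by
    intro k l
    rw [mul_assoc, ← diagonal_mul_mul_diagonal_mul_transpose_apply, ← smul_eq_mul,
      ← Matrix.smul_apply, hK, one_apply]
  exact bform_prod_pow_xt hθt hθ hpt horth hxt hn hm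

theorem stmt_8 (d : ℕ) (hd : 1 ≤ d) (ν : ℂ) (hν : ν ≠ 0)
    (p pt : Fin (d+1) → ℂ) (U : Matrix (Fin (d+1)) (Fin (d+1)) ℂ)
    (hp0 : p 0 = 1/ν) (hpt0 : pt 0 = 1/ν)
    (hU : ∀ j, U 0 j = 1 ∧ U j 0 = 1)
    (hK : ν • (Matrix.diagonal p * U * Matrix.diagonal pt * U.transpose) = 1)
    (θt : ℂ) (hθt : θt ≠ 0) (θ : ℂ) (hθ : θ = ν / θt)
    (N : ℕ) (hN : 1 ≤ N)
    (xt : Fin (d+1) → MvPolynomial (Fin (d+1)) ℂ)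
    (hxt : ∀ k, xt k = C θt * ∑ j, C (pt j * U k j) * X j)
    (n m : Fin (d+1) → ℕ) (hn : ∑ i, n i = N) (hm : ∑ i, m i = N) :
    bform d N θ pt (∏ k, xt k ^ n k) (∏ k, xt k ^ m k)
      = if n = m then θt ^ N * (∏ i, ((n i).factorial : ℂ)) / ∏ i, p i ^ n i
        else 0 :=
  stmt_8_general d ν p pt U hK θt hθt θ hθ N xt hxt n m hn hm
end

section
/- Let (ν, P, P̃, U) ∈ K_d, let θ̃ be a nonzero complex number, θ = ν/θ̃, fix a positive integer N, and define x̃_k = θ̃ ∑_{j=0}^{d} p̃_j u_{k,j} x_j for k = 0,...,d. Then for every n ∈ I one has the polynomial identity x^n / θ^N = N! ∑_{ñ ∈ I} 𝒫(n', ñ') (p^ñ / ñ!) x̃^ñ in ℂ[x_0,...,x_d], where for λ ∈ I, λ' = (λ_1,...,λ_d) ∈ ℕ₀^d denotes λ with the 0-th coordinate dropped. -/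
/-!
Write `S = ∑ₖ zₖ` and `ω_{ij} = 1 - u_{ij}`. Since `u_{0j} = 1`, the `j`-th linear form
`∑ₖ u_{kj} zₖ` is `S - ∑_{i ≥ 1} ω_{ij} zᵢ` (and `u_{k0} = 1` makes it `S` for `j = 0`), so
expanding every power multinomially writes `∏ⱼ (∑ₖ u_{kj} zₖ)^{nⱼ}` as a sum over `d × d`
exponent matrices `A` of `∏ⱼ (-nⱼ)_{cⱼ(A)} ∏ ω^A / A! · z'^{r(A)} S^{N - |A|}`, with row sums `r`
and column sums `c`. Expanding `S^{N - |A|}` multinomially and shifting the summation index by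
`r(A)` turns `N! ∑_ñ 𝒫(n', ñ') z^ñ / ñ!` into the same sum: this is the generating function of
the Krawtchouk polynomials. The theorem is its case `zₖ = pₖ x̃ₖ`, because `ν P U P̃ Uᵗ = I`
forces `Uᵗ P U P̃ = ν⁻¹ I`, whence `∑ₖ u_{ki} pₖ x̃ₖ = xᵢ / θ`.
-/

open Matrix Finset MvPolynomial

/-- The multivariate Krawtchouk polynomial `𝒫(m, m̃)` of Griffiths, in the
Gelfand hypergeometric form of Mizukawa–Tanaka, with `ω_{i,j} = 1 - u_{i,j}`.
The sum is over all `d × d` matrices `A` with entries in `{0,…,N}` whose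
total entry sum is at most `N` (i.e. over `M_{d,N}`). -/
noncomputable def kraw (d N : ℕ) (U : Matrix (Fin (d+1)) (Fin (d+1)) ℂ)
    (m mt : Fin d → ℕ) : ℂ :=
  ∑ A : Fin d → Fin d → Fin (N+1),
    if (∑ i, ∑ j, (A i j : ℕ)) ≤ N then
      (∏ j, (ascPochhammer ℂ (∑ i, (A i j : ℕ))).eval (-(m j : ℂ))) *
        (∏ i, (ascPochhammer ℂ (∑ j, (A i j : ℕ))).eval (-(mt i : ℂ))) /
        (ascPochhammer ℂ (∑ i, ∑ j, (A i j : ℕ))).eval (-(N : ℂ)) *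
        ∏ i, ∏ j, (1 - U i.succ j.succ) ^ (A i j : ℕ) / ((A i j : ℕ).factorial : ℂ)
    else 0

section Multinomial
variable {ι : Type*} [Fintype ι]

theorem Nat.multinomial_mul_prod_descFactorial {m r : ι → ℕ} (h : r ≤ m) :
    Nat.multinomial univ m * ∏ i, (m i).descFactorial (r i)
      = (∑ i, m i).descFactorial (∑ i, r i) * Nat.multinomial univ (m - r) := by
  have hsum : ∑ i, (m - r) i = ∑ i, m i - ∑ i, r i := Finset.sum_tsub_distrib _ fun i _ => h i
  have hr : ∑ i, r i ≤ ∑ i, m i := Finset.sum_le_sum fun i _ => h i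
  refine Nat.eq_of_mul_eq_mul_right
    (Finset.prod_pos (s := univ) fun i _ => Nat.factorial_pos ((m - r) i)) ?_
  calc Nat.multinomial univ m * (∏ i, (m i).descFactorial (r i)) * ∏ i, ((m - r) i).factorial
      = (∏ i, (m i).factorial) * Nat.multinomial univ m := by
        rw [mul_assoc, ← Finset.prod_mul_distrib, mul_comm]
        congr 1
        exact Finset.prod_congr rfl fun i _ => by
          rw [mul_comm]; exact Nat.factorial_mul_descFactorial (h i)
    _ = (∑ i, m i).descFactorial (∑ i, r i) * ((∏ i, ((m - r) i).factorial)
          * Nat.multinomial univ (m - r)) := by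
        rw [Nat.multinomial_spec, Nat.multinomial_spec, hsum, mul_comm,
          Nat.factorial_mul_descFactorial hr]
    _ = _ := by ring

variable [DecidableEq ι] {R : Type*} [CommSemiring R]

/- Coefficientwise this is `∏ᵢ ∂ᵢ^{rᵢ}` applied to `(∑ᵢ zᵢ)^N`, multiplied back by `z^r`. -/
theorem sum_piAntidiag_multinomial_mul_prod_descFactorial (z : ι → R) {N : ℕ} {r : ι → ℕ}
    (hr : ∑ i, r i ≤ N) :
    ∑ m ∈ piAntidiag univ N,
        (Nat.multinomial univ m * ∏ i, (m i).descFactorial (r i)) • ∏ i, z i ^ m i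
      = N.descFactorial (∑ i, r i) • ((∏ i, z i ^ r i) * (∑ i, z i) ^ (N - ∑ i, r i)) := by
  rw [Finset.sum_pow_eq_sum_piAntidiag, Finset.mul_sum, Finset.smul_sum,
    ← Finset.sum_filter_of_ne (p := fun m => ∀ i, r i ≤ m i)]
  swap
  · intro m _ hm i
    by_contra! hi
    exact hm (by rw [Finset.prod_eq_zero (mem_univ i) (Nat.descFactorial_of_lt hi)]; simp)
  refine Finset.sum_nbij' (· - r) (· + r) ?_ ?_ ?_ ?_ ?_
  · intro m hm
    simp only [mem_filter, mem_piAntidiag] at hm ⊢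
    refine ⟨?_, fun i _ => mem_univ i⟩
    rw [← hm.1.1]
    exact Finset.sum_tsub_distrib _ fun i _ => hm.2 i
  · intro m hm
    simp only [mem_filter, mem_piAntidiag] at hm ⊢
    refine ⟨⟨?_, fun i _ => mem_univ i⟩, fun i => Nat.le_add_left _ _⟩
    simp only [Pi.add_apply, Finset.sum_add_distrib, hm.1]
    omega
  · intro m hm
    simp only [mem_filter] at hm
    exact tsub_add_cancel_of_le hm.2
  · intro m _
    exact add_tsub_cancel_right m r
  · intro m hm
    simp only [mem_filter, mem_piAntidiag] at hm
    have hz : ∏ i, z i ^ m i = (∏ i, z i ^ r i) * ∏ i, z i ^ (m - r) i := by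
      rw [← Finset.prod_mul_distrib]
      exact Finset.prod_congr rfl fun i _ => by
        rw [← pow_add, Pi.sub_apply, Nat.add_sub_cancel' (hm.2 i)]
    rw [Nat.multinomial_mul_prod_descFactorial hm.2, hm.1.1, hz, mul_smul, nsmul_eq_mul,
      nsmul_eq_mul]
    ring

theorem add_sum_pow_eq_sum_choose_mul_multinomial (x : R) (y : ι → R) (n : ℕ) {T : Finset (ι → ℕ)}
    (hT : ∀ a : ι → ℕ, ∑ i, a i ≤ n → a ∈ T) :
    (x + ∑ i, y i) ^ n = ∑ a ∈ T,
      (n.choose (∑ i, a i) * Nat.multinomial univ a) • ((∏ i, y i ^ a i) * x ^ (n - ∑ i, a i)) := by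
  set g : (ι → ℕ) → R := fun a =>
    (n.choose (∑ i, a i) * Nat.multinomial univ a) • ((∏ i, y i ^ a i) * x ^ (n - ∑ i, a i))
  have hfiber : ∀ s ∈ range (n + 1), {a ∈ T | ∑ i, a i = s} = piAntidiag univ s := by
    intro s hs
    ext a
    rw [mem_range] at hs
    simp only [mem_filter, mem_piAntidiag, mem_univ, implies_true, and_true]
    exact ⟨And.right, fun ha => ⟨hT a (ha ▸ Nat.le_of_lt_succ hs), ha⟩⟩
  calc (x + ∑ i, y i) ^ n
      = ∑ s ∈ range (n + 1), (∑ i, y i) ^ s * x ^ (n - s) * n.choose s := by rw [add_comm, add_pow]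
    _ = ∑ s ∈ range (n + 1), ∑ a ∈ T with ∑ i, a i = s, g a := by
        refine Finset.sum_congr rfl fun s hs => ?_
        rw [hfiber s hs, Finset.sum_pow_eq_sum_piAntidiag, Finset.sum_mul, Finset.sum_mul]
        refine Finset.sum_congr rfl fun a ha => ?_
        rw [← (mem_piAntidiag.mp ha).1]
        simp only [g, nsmul_eq_mul]
        push_cast
        ring
    _ = ∑ a ∈ T with ∑ i, a i ∈ range (n + 1), g a := Finset.sum_fiberwise_eq_sum_filter _ _ _ _
    _ = ∑ a ∈ T, g a := by
        refine Finset.sum_filter_of_ne fun a _ ha => mem_range.mpr (Nat.lt_succ_of_le ?_)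
        by_contra! hlt
        exact ha (by simp only [g, Nat.choose_eq_zero_of_lt hlt, zero_mul, zero_smul])

end Multinomial

theorem ascPochhammer_eval_neg_natCast (R : Type*) [CommRing R] (n k : ℕ) :
    (ascPochhammer R k).eval (-(n : R)) = (-1) ^ k * n.descFactorial k := by
  rw [ascPochhammer_eval_neg_eq_descPochhammer, descPochhammer_eval_eq_descFactorial]

section Expansion
variable {R : Type*} [CommRing R] [Algebra ℂ R] {ι : Type*} [Fintype ι] [DecidableEq ι]

theorem sub_sum_smul_pow_eq_sum_ascPochhammer (S : R) (c : ι → ℂ) (y : ι → R) {n B : ℕ}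
    (hn : n ≤ B) :
    (S - ∑ i, c i • y i) ^ n = ∑ a : ι → Fin (B + 1),
      ((ascPochhammer ℂ (∑ i, (a i : ℕ))).eval (-(n : ℂ)) *
          ∏ i, c i ^ (a i : ℕ) / ((a i : ℕ).factorial : ℂ)) •
        ((∏ i, y i ^ (a i : ℕ)) * S ^ (n - ∑ i, (a i : ℕ))) := by
  let val : (ι → Fin (B + 1)) ↪ (ι → ℕ) := Fin.valEmbedding.arrowCongrRight
  have hT : ∀ a : ι → ℕ, ∑ i, a i ≤ n → a ∈ univ.map val := by
    intro a ha
    refine mem_map.mpr ⟨fun i => ⟨a i, ?_⟩, mem_univ _, rfl⟩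
    have := Finset.single_le_sum (fun j _ => Nat.zero_le (a j)) (mem_univ i)
    omega
  rw [sub_eq_add_neg, ← Finset.sum_neg_distrib,
    add_sum_pow_eq_sum_choose_mul_multinomial S _ n hT, Finset.sum_map]
  simp only [val, Function.Embedding.arrowCongrRight_apply, Function.comp_def,
    Fin.valEmbedding_apply]
  refine Finset.sum_congr rfl fun a _ => ?_
  have hfact : (∏ i, ((a i : ℕ).factorial : ℂ)) ≠ 0 :=
    Finset.prod_ne_zero_iff.mpr fun i _ => Nat.cast_ne_zero.mpr (Nat.factorial_ne_zero _)
  have hcoeff : ((n.choose (∑ i, (a i : ℕ)) * Nat.multinomial univ fun i => (a i : ℕ) : ℕ) : ℂ)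
      = n.descFactorial (∑ i, (a i : ℕ)) / ∏ i, ((a i : ℕ).factorial : ℂ) := by
    rw [eq_div_iff hfact, Nat.descFactorial_eq_factorial_mul_choose, ← Nat.multinomial_spec]
    push_cast
    ring
  simp only [← neg_smul, smul_pow, Finset.prod_smul, smul_mul_assoc, smul_smul,
    ← Nat.cast_smul_eq_nsmul ℂ]
  congr 1
  rw [hcoeff, ascPochhammer_eval_neg_natCast, Finset.prod_div_distrib]
  simp only [neg_pow (c _), Finset.prod_mul_distrib, Finset.prod_pow_eq_pow_sum]
  field_simp

variable {κ : Type*} [Fintype κ] [DecidableEq κ]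

/- The common normal form of both sides of the generating function of the Krawtchouk
polynomials: the expansion of `S ^ n₀ * ∏ j, (S - ∑ i, ω i j • y i) ^ m j` over exponent
matrices. -/
noncomputable def krawtchoukExpansion (N : ℕ) (ω : ι → κ → ℂ) (m : κ → ℕ) (y : ι → R) (S : R) :
    R :=
  ∑ A : ι → κ → Fin (N + 1), if ∑ i, ∑ j, (A i j : ℕ) ≤ N then
    ((∏ j, (ascPochhammer ℂ (∑ i, (A i j : ℕ))).eval (-(m j : ℂ))) *
        ∏ i, ∏ j, ω i j ^ (A i j : ℕ) / ((A i j : ℕ).factorial : ℂ)) •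
      ((∏ i, y i ^ ∑ j, (A i j : ℕ)) * S ^ (N - ∑ i, ∑ j, (A i j : ℕ)))
  else 0

theorem pow_mul_prod_sub_sum_smul_pow_eq_krawtchoukExpansion (S : R) (ω : ι → κ → ℂ)
    (y : ι → R) {n₀ N : ℕ} (m : κ → ℕ) (hm : n₀ + ∑ j, m j = N) :
    S ^ n₀ * ∏ j, (S - ∑ i, ω i j • y i) ^ m j = krawtchoukExpansion N ω m y S := by
  have hmN : ∀ j, m j ≤ N := fun j => by
    have := Finset.single_le_sum (fun j _ => Nat.zero_le (m j)) (mem_univ j)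
    omega
  simp only [sub_sum_smul_pow_eq_sum_ascPochhammer S _ y (hmN _), Fintype.prod_sum,
    Finset.mul_sum, krawtchoukExpansion]
  refine Fintype.sum_equiv (Equiv.piComm _) _ _ fun B => ?_
  simp only [Equiv.piComm_apply, Function.swap, Finset.prod_smul]
  by_cases hc : ∀ j, ∑ i, (B j i : ℕ) ≤ m j
  · have hcm : ∑ j, ∑ i, (B j i : ℕ) ≤ ∑ j, m j := Finset.sum_le_sum fun j _ => hc j
    have hcomm : ∑ i, ∑ j, (B j i : ℕ) = ∑ j, ∑ i, (B j i : ℕ) := Finset.sum_comm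
    have hcN : ∑ i, ∑ j, (B j i : ℕ) ≤ N := by omega
    have hS : S ^ n₀ * ∏ j, S ^ (m j - ∑ i, (B j i : ℕ)) = S ^ (N - ∑ i, ∑ j, (B j i : ℕ)) := by
      rw [Finset.prod_pow_eq_pow_sum, ← pow_add, Finset.sum_tsub_distrib _ fun j _ => hc j]
      congr 1
      omega
    rw [if_pos hcN, Finset.prod_mul_distrib, Finset.prod_comm (s := univ) (t := univ)
      (f := fun j i => ω i j ^ (B j i : ℕ) / ((B j i : ℕ).factorial : ℂ)), mul_smul_comm,
      Finset.prod_mul_distrib, Finset.prod_comm (s := univ) (t := univ)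
      (f := fun j i => y i ^ (B j i : ℕ)), mul_left_comm, hS]
    simp only [Finset.prod_pow_eq_pow_sum]
  · push Not at hc
    obtain ⟨j, hj⟩ := hc
    have hzero : ∏ j, (ascPochhammer ℂ (∑ i, (B j i : ℕ))).eval (-(m j : ℂ)) = 0 :=
      Finset.prod_eq_zero (mem_univ j) (ascPochhammer_eval_neg_coe_nat_of_lt hj)
    rw [Finset.prod_mul_distrib, hzero]
    simp

theorem sum_antidiagonalTuple_ascPochhammer_smul {k N : ℕ} (z : Fin (k + 1) → R) (r : Fin k → ℕ)
    (hr : ∑ i, r i ≤ N) :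
    ∑ m ∈ Finset.Nat.antidiagonalTuple (k + 1) N,
        ((N.factorial : ℂ) / (∏ i, ((m i).factorial : ℂ)) *
          ∏ i, (ascPochhammer ℂ (r i)).eval (-(m i.succ : ℂ))) • ∏ i, z i ^ m i
      = (ascPochhammer ℂ (∑ i, r i)).eval (-(N : ℂ)) •
          ((∏ i, z i.succ ^ r i) * (∑ i, z i) ^ (N - ∑ i, r i)) := by
  have hshift := sum_piAntidiag_multinomial_mul_prod_descFactorial z (N := N) (r := Fin.cons 0 r)
    (by rwa [Fin.sum_cons, zero_add])
  have hz : ∏ i, z i ^ (Fin.cons 0 r : Fin (k + 1) → ℕ) i = ∏ i, z i.succ ^ r i := by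
    simp [Fin.prod_univ_succ]
  rw [Fin.sum_cons, zero_add, hz, ← Nat.cast_smul_eq_nsmul ℂ] at hshift
  have hpiAntidiag : Finset.Nat.antidiagonalTuple (k + 1) N = piAntidiag univ N := by
    ext m
    simp [Finset.Nat.mem_antidiagonalTuple, mem_piAntidiag]
  rw [hpiAntidiag, ascPochhammer_eval_neg_natCast, mul_smul, ← hshift, Finset.smul_sum]
  refine Finset.sum_congr rfl fun m hm => ?_
  have hfact : (∏ i, ((m i).factorial : ℂ)) ≠ 0 :=
    Finset.prod_ne_zero_iff.mpr fun i _ => Nat.cast_ne_zero.mpr (Nat.factorial_ne_zero _)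
  have hmult : (N.factorial : ℂ) / ∏ i, ((m i).factorial : ℂ) = Nat.multinomial univ m := by
    rw [div_eq_iff hfact, ← (mem_piAntidiag.mp hm).1, ← Nat.multinomial_spec]
    push_cast
    ring
  rw [← Nat.cast_smul_eq_nsmul ℂ, smul_smul, hmult]
  congr 1
  rw [Fin.prod_univ_succ]
  simp only [Fin.cons_zero, Fin.cons_succ, Nat.descFactorial_zero, one_mul,
    ascPochhammer_eval_neg_natCast, Finset.prod_mul_distrib, Finset.prod_pow_eq_pow_sum]
  push_cast
  ring

theorem factorial_smul_sum_kraw_smul_eq_krawtchoukExpansion {d N : ℕ}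
    (U : Matrix (Fin (d + 1)) (Fin (d + 1)) ℂ) (m : Fin d → ℕ) (z : Fin (d + 1) → R) :
    (N.factorial : ℂ) • ∑ mt ∈ Finset.Nat.antidiagonalTuple (d + 1) N,
        (kraw d N U m (fun j => mt j.succ) / ∏ i, ((mt i).factorial : ℂ)) • ∏ i, z i ^ mt i
      = krawtchoukExpansion N (fun i j : Fin d => 1 - U i.succ j.succ) m (fun i => z i.succ)
          (∑ i, z i) := by
  simp only [kraw, krawtchoukExpansion, Finset.sum_div, Finset.sum_smul, Finset.smul_sum]
  rw [Finset.sum_comm]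
  refine Finset.sum_congr rfl fun A _ => ?_
  split_ifs with hA
  · have hP : (ascPochhammer ℂ (∑ i, ∑ j, (A i j : ℕ))).eval (-(N : ℂ)) ≠ 0 := by
      rw [ascPochhammer_eval_neg_natCast]
      exact mul_ne_zero (pow_ne_zero _ (by norm_num))
        (Nat.cast_ne_zero.mpr (Nat.descFactorial_eq_zero_iff_lt.not.mpr (not_lt.mpr hA)))
    rw [← div_mul_cancel₀ (_ * _) hP, mul_smul,
      ← sum_antidiagonalTuple_ascPochhammer_smul z (fun i => ∑ j, (A i j : ℕ)) hA, Finset.smul_sum]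
    refine Finset.sum_congr rfl fun mt _ => ?_
    rw [smul_smul, smul_smul]
    congr 1
    field_simp
  · simp

theorem sum_smul_eq_sum_sub_sum_smul {K M : Type*} [Ring K] [AddCommGroup M] [Module K M] {d : ℕ}
    (u : Fin (d + 1) → K) (hu : u 0 = 1) (z : Fin (d + 1) → M) :
    ∑ k, u k • z k = ∑ k, z k - ∑ k : Fin d, (1 - u k.succ) • z k.succ := by
  simp only [Fin.sum_univ_succ, hu, one_smul, sub_smul, Finset.sum_sub_distrib]
  abel

theorem prod_sum_smul_pow_eq_kraw {d N : ℕ} (U : Matrix (Fin (d + 1)) (Fin (d + 1)) ℂ)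
    (hU : ∀ j, U 0 j = 1 ∧ U j 0 = 1) (n : Fin (d + 1) → ℕ) (hn : ∑ i, n i = N)
    (z : Fin (d + 1) → R) :
    ∏ i, (∑ k, U k i • z k) ^ n i
      = (N.factorial : ℂ) • ∑ mt ∈ Finset.Nat.antidiagonalTuple (d + 1) N,
          (kraw d N U (fun j => n j.succ) (fun j => mt j.succ) / ∏ i, ((mt i).factorial : ℂ)) •
            ∏ i, z i ^ mt i := by
  have hcol : ∀ j, ∑ k, U k j • z k = ∑ k, z k - ∑ k : Fin d, (1 - U k.succ j) • z k.succ :=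
    fun j => sum_smul_eq_sum_sub_sum_smul (fun k => U k j) (hU j).1 z
  rw [factorial_smul_sum_kraw_smul_eq_krawtchoukExpansion,
    ← pow_mul_prod_sub_sum_smul_pow_eq_krawtchoukExpansion _ _ _ _
      (by rw [← hn, Fin.sum_univ_succ]), Fin.prod_univ_succ]
  simp only [hcol, (hU _).2, one_smul]

end Expansion

theorem transpose_mul_diagonal_mul_mul_diagonal_eq_inv_smul {K ι : Type*} [Field K] [Fintype ι]
    [DecidableEq ι] {ν : K} (hν : ν ≠ 0) {p pt : ι → K} {U : Matrix ι ι K}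
    (hK : ν • (diagonal p * U * diagonal pt * Uᵀ) = 1) :
    Uᵀ * diagonal p * U * diagonal pt = ν⁻¹ • 1 := by
  rw [← Matrix.smul_mul, mul_eq_one_comm, Matrix.mul_smul] at hK
  rw [← hK, smul_smul, inv_mul_cancel₀ hν, one_smul, Matrix.mul_assoc, Matrix.mul_assoc,
    Matrix.mul_assoc]

theorem sum_smul_sum_smul_eq_smul_of_dual {K M ι : Type*} [CommRing K] [AddCommGroup M]
    [Module K M] [Fintype ι] [DecidableEq ι] {p pt : ι → K} {U : Matrix ι ι K} {c : K}
    (hdual : Uᵀ * diagonal p * U * diagonal pt = c • 1) (x : ι → M) (i : ι) :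
    ∑ k, (U k i * p k) • ∑ j, (pt j * U k j) • x j = c • x i := by
  have hentry : ∀ j, ∑ k, U k i * p k * (pt j * U k j) = (c • (1 : Matrix ι ι K)) i j := by
    intro j
    rw [← hdual, Matrix.mul_diagonal, Matrix.mul_apply, Finset.sum_mul]
    simp only [Matrix.mul_diagonal, Matrix.transpose_apply]
    exact Finset.sum_congr rfl fun k _ => by ring
  calc ∑ k, (U k i * p k) • ∑ j, (pt j * U k j) • x j
      = ∑ j, (∑ k, U k i * p k * (pt j * U k j)) • x j := by
        simp only [Finset.smul_sum, smul_smul, Finset.sum_smul]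
        exact Finset.sum_comm
    _ = c • x i := by
        simp only [hentry, Matrix.smul_apply, Matrix.one_apply, smul_eq_mul, mul_ite, mul_one,
          mul_zero, ite_smul, zero_smul, Finset.sum_ite_eq, Finset.mem_univ, if_true]

theorem stmt_10_general (d : ℕ) (ν : ℂ) (hν : ν ≠ 0)
    (p pt : Fin (d+1) → ℂ) (U : Matrix (Fin (d+1)) (Fin (d+1)) ℂ)
    (hU : ∀ j, U 0 j = 1 ∧ U j 0 = 1)
    (hK : ν • (Matrix.diagonal p * U * Matrix.diagonal pt * U.transpose) = 1)
    (θt : ℂ) (θ : ℂ) (hθ : θ = ν / θt) (N : ℕ)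
    (xt : Fin (d+1) → MvPolynomial (Fin (d+1)) ℂ)
    (hxt : ∀ k, xt k = C θt * ∑ j, C (pt j * U k j) * X j)
    (n : Fin (d+1) → ℕ) (hn : ∑ i, n i = N) :
    (θ ^ N)⁻¹ • ∏ i, X i ^ n i
      = (N.factorial : ℂ) • ∑ nt ∈ Finset.Nat.antidiagonalTuple (d+1) N,
          (kraw d N U (fun j => n j.succ) (fun j => nt j.succ)
            * (∏ i, p i ^ nt i) / ∏ i, ((nt i).factorial : ℂ)) • ∏ k, xt k ^ nt k := by
  have hdual := transpose_mul_diagonal_mul_mul_diagonal_eq_inv_smul hν hK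
  have hxt' : ∀ k, xt k = θt • ∑ j, (pt j * U k j) • X j := fun k => by
    simp only [hxt, smul_eq_C_mul, Finset.mul_sum]
  have hX : ∀ i, ∑ k, U k i • (p k • xt k) = θ⁻¹ • X i := fun i => by
    rw [hθ, inv_div, div_eq_mul_inv, mul_smul, ← sum_smul_sum_smul_eq_smul_of_dual hdual,
      Finset.smul_sum]
    refine Finset.sum_congr rfl fun k _ => ?_
    rw [hxt']
    simp only [smul_smul]
    congr 1
    ring
  have key := prod_sum_smul_pow_eq_kraw U hU n hn fun k => p k • xt k
  simp only [hX, smul_pow, Finset.prod_smul, Finset.prod_pow_eq_pow_sum, hn] at key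
  rw [← inv_pow, key]
  congr 1
  refine Finset.sum_congr rfl fun mt _ => ?_
  rw [smul_smul, mul_div_right_comm]

theorem stmt_10 (d : ℕ) (hd : 1 ≤ d) (ν : ℂ) (hν : ν ≠ 0)
    (p pt : Fin (d+1) → ℂ) (U : Matrix (Fin (d+1)) (Fin (d+1)) ℂ)
    (hp0 : p 0 = 1/ν) (hpt0 : pt 0 = 1/ν)
    (hU : ∀ j, U 0 j = 1 ∧ U j 0 = 1)
    (hK : ν • (Matrix.diagonal p * U * Matrix.diagonal pt * U.transpose) = 1)
    (θt : ℂ) (hθt : θt ≠ 0) (θ : ℂ) (hθ : θ = ν / θt) (N : ℕ) (hN : 1 ≤ N)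
    (xt : Fin (d+1) → MvPolynomial (Fin (d+1)) ℂ)
    (hxt : ∀ k, xt k = C θt * ∑ j, C (pt j * U k j) * X j)
    (n : Fin (d+1) → ℕ) (hn : ∑ i, n i = N) :
    (θ ^ N)⁻¹ • ∏ i, X i ^ n i
      = (N.factorial : ℂ) • ∑ nt ∈ Finset.Nat.antidiagonalTuple (d+1) N,
          (kraw d N U (fun j => n j.succ) (fun j => nt j.succ)
            * (∏ i, p i ^ nt i) / ∏ i, ((nt i).factorial : ℂ)) • ∏ k, xt k ^ nt k :=
  stmt_10_general d ν hν p pt U hU hK θt θ hθ N xt hxt n hn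
end

section
/- Let (ν, P, P̃, U) ∈ K_d, fix a positive integer N, and let m, m̃ ∈ ℕ₀^d with |m| ≤ N and |m̃| ≤ N. Then: −|m| 𝒫(m, m̃) = p_0 ∑_{l=1}^{d} m̃_l 𝒫(m, m̃ − v_l) + ∑_{l=1}^{d} p_l (N − |m̃|) 𝒫(m, m̃ + v_l) + ∑_{1 ≤ k ≠ l ≤ d} p_k m̃_l 𝒫(m, m̃ + v_k − v_l) + ( ∑_{j=1}^{d} m̃_j p_j + p_0 (N − |m̃|) − N ) 𝒫(m, m̃), where v_1,...,v_d is the standard basis of ℤ^d and each term carrying a factor m̃_l or (N − |m̃|) is interpreted as 0 when that factor vanishes. -/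
/-!
Write each summand of `𝒫(m, m̃)` as `w(A) F_A` with `F_A = ∏ᵢ (-m̃ᵢ)_{rᵢ(A)}`, where `rᵢ(A)` are
the row sums of `A` and the weight `w(A)` does not depend on `m̃`. The contiguous relations of
the Pochhammer symbol, together with `∑ pᵢ = 1`, turn the right-hand side into
`∑_A w(A) (-|A| F_A - (N + 1 - |A|) ∑_k p_k r_k(A) G_{A,k})`, where `G_{A,k}` is `F_A` with `r_k`
lowered by one. Writing `r_k(A) = ∑_j a_{kj}` and substituting `A = B + E_{kj}`, the ratio
`w(B + E_{kj}) / w(B) = (1 - u_{kj}) (m_j - c_j(B)) / ((N - |B|) (b_{kj} + 1))` cancels the factor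
`(N + 1 - |A|) a_{kj}`, and the orthogonality relation `∑_k p_k (1 - u_{kj}) = 1`, read off from
`ν P U P̃ Uᵗ = I`, collapses the sum over `k`. What remains is `∑_B w(B) (|m| - |B|) F_B`, and the
two parts combine to `-|m| 𝒫(m, m̃)`.
-/

open Matrix Finset

namespace Krawtchouk

open Function

section Pochhammer

variable {R : Type*} [CommRing R]

theorem natCast_mul_ascPochhammer_eval_neg_pred (n r : ℕ) :
    (n : R) * (ascPochhammer R r).eval (-((n - 1 : ℕ) : R))
      = ((n : R) - r) * (ascPochhammer R r).eval (-(n : R)) := by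
  rcases n with _ | n
  · cases r <;> simp
  · induction r with
    | zero => simp
    | succ r ih =>
      simp only [ascPochhammer_succ_eval, Nat.add_sub_cancel] at ih ⊢
      push_cast at ih ⊢
      linear_combination (-(n : R) + r) * ih

theorem ascPochhammer_eval_neg_succ (c r : ℕ) :
    (ascPochhammer R r).eval (-((c : R) + 1))
      = (ascPochhammer R r).eval (-(c : R)) - r * (ascPochhammer R (r - 1)).eval (-(c : R)) := by
  rcases r with _ | r
  · simp
  · have h : (ascPochhammer R (r + 1)).eval (-((c : R) + 1))
        = -((c : R) + 1) * (ascPochhammer R r).eval (-(c : R)) := by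
      simp [ascPochhammer_succ_left, Polynomial.eval_comp]
    rw [h, Nat.add_sub_cancel, ascPochhammer_succ_eval]
    push_cast
    ring

theorem natCast_mul_ascPochhammer_eval_pred (r : ℕ) (x : R) :
    (r : R) * ((ascPochhammer R (r - 1)).eval x * (x + r - 1))
      = r * (ascPochhammer R r).eval x := by
  rcases r with _ | r
  · simp
  · rw [Nat.add_sub_cancel, ascPochhammer_succ_eval]
    push_cast
    ring

end Pochhammer

section PochProd

variable {ι R : Type*} [Fintype ι] [DecidableEq ι] [CommRing R]

@[to_additive]
theorem prod_apply_update {M α : Type*} [CommMonoid M] (g : ι → α → M) (c : ι → α) (k : ι)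
    (v : α) : ∏ i, g i (update c k v i) = g k v * ∏ i ∈ univ.erase k, g i (c i) := by
  simp_rw [apply_update g c k v]
  rw [Finset.prod_update_of_mem (mem_univ k), sdiff_singleton_eq_erase]

@[to_additive]
theorem prod_apply_update_eq_prod_mul {M α : Type*} [CommMonoid M] {g : ι → α → M} {c : ι → α}
    {k : ι} {v : α} {a : M} (h : g k v = g k (c k) * a) :
    ∏ i, g i (update c k v i) = (∏ i, g i (c i)) * a := by
  rw [prod_apply_update, h, ← mul_prod_erase _ _ (mem_univ k), mul_right_comm]

noncomputable def pochProd (r x : ι → ℕ) : R :=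
  ∏ i, (ascPochhammer R (r i)).eval (-(x i : R))

theorem pochProd_eq_mul_prod_erase (r x : ι → ℕ) (l : ι) :
    (pochProd r x : R) = (ascPochhammer R (r l)).eval (-(x l : R))
      * ∏ i ∈ univ.erase l, (ascPochhammer R (r i)).eval (-(x i : R)) :=
  (mul_prod_erase _ _ (mem_univ l)).symm

theorem pochProd_update_left (r x : ι → ℕ) (l : ι) (v : ℕ) :
    (pochProd (update r l v) x : R) = (ascPochhammer R v).eval (-(x l : R))
      * ∏ i ∈ univ.erase l, (ascPochhammer R (r i)).eval (-(x i : R)) :=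
  prod_apply_update (fun i n => (ascPochhammer R n).eval (-(x i : R))) r l v

theorem pochProd_update_right (r x : ι → ℕ) (l : ι) (v : ℕ) :
    (pochProd r (update x l v) : R) = (ascPochhammer R (r l)).eval (-(v : R))
      * ∏ i ∈ univ.erase l, (ascPochhammer R (r i)).eval (-(x i : R)) :=
  prod_apply_update (fun i (n : ℕ) => (ascPochhammer R (r i)).eval (-(n : R))) x l v

theorem natCast_mul_pochProd_update_pred (r x : ι → ℕ) (l : ι) :
    (x l : R) * pochProd r (update x l (x l - 1)) = ((x l : R) - r l) * pochProd r x := by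
  rw [pochProd_update_right, pochProd_eq_mul_prod_erase r x l, ← mul_assoc, ← mul_assoc,
    natCast_mul_ascPochhammer_eval_neg_pred]

theorem pochProd_update_succ (r x : ι → ℕ) (l : ι) :
    (pochProd r (update x l (x l + 1)) : R)
      = pochProd r x - r l * pochProd (update r l (r l - 1)) x := by
  rw [pochProd_update_right, pochProd_update_left, pochProd_eq_mul_prod_erase r x l,
    Nat.cast_succ, ascPochhammer_eval_neg_succ]
  ring

theorem natCast_mul_pochProd_update_pred_mul (r x : ι → ℕ) (k : ι) :
    (r k : R) * (pochProd (update r k (r k - 1)) x * (-(x k : R) + r k - 1))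
      = r k * pochProd r x := by
  rw [pochProd_update_left, pochProd_eq_mul_prod_erase r x k]
  linear_combination (∏ i ∈ univ.erase k, (ascPochhammer R (r i)).eval (-(x i : R)))
    * natCast_mul_ascPochhammer_eval_pred (r k) (-(x k : R))

theorem natCast_mul_pochProd_update_update {k l : ι} (hlk : l ≠ k) (r x : ι → ℕ) :
    (x l : R) * pochProd r (update (update x k (x k + 1)) l (x l - 1))
      = ((x l : R) - r l) * (pochProd r x - r k * pochProd (update r k (r k - 1)) x) := by
  have h := natCast_mul_pochProd_update_pred (R := R) r (update x k (x k + 1)) l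
  rw [update_of_ne hlk] at h
  rw [h, pochProd_update_succ]

end PochProd

section Recurrence

variable {ι R : Type*} [Fintype ι] [DecidableEq ι] [CommRing R]

/-- The right-hand side of the recurrence as a linear functional of `f = 𝒫(m, ·)`, with
`p₀ = p_0` and `q k = p_{k+1}`. -/
noncomputable def recurrenceOp (p₀ : R) (q : ι → R) (N : ℕ) (x : ι → ℕ) :
    ((ι → ℕ) → R) →ₗ[R] R where
  toFun f :=
    p₀ * (∑ l, (x l : R) * f (update x l (x l - 1)))
      + (∑ l, q l * ((N : R) - ∑ i, (x i : R)) * f (update x l (x l + 1)))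
      + (∑ k, ∑ l ∈ univ.erase k,
          q k * (x l : R) * f (update (update x k (x k + 1)) l (x l - 1)))
      + ((∑ j, (x j : R) * q j) + p₀ * ((N : R) - ∑ i, (x i : R)) - (N : R)) * f x
  map_add' f g := by
    simp only [Pi.add_apply, mul_add, sum_add_distrib]
    ring
  map_smul' c f := by
    simp only [Pi.smul_apply, smul_eq_mul, RingHom.id_apply, mul_add, mul_sum, mul_left_comm c]

theorem recurrenceOp_apply (p₀ : R) (q : ι → R) (N : ℕ) (x : ι → ℕ) (f : (ι → ℕ) → R) :
    recurrenceOp p₀ q N x f =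
      p₀ * (∑ l, (x l : R) * f (update x l (x l - 1)))
        + (∑ l, q l * ((N : R) - ∑ i, (x i : R)) * f (update x l (x l + 1)))
        + (∑ k, ∑ l ∈ univ.erase k,
            q k * (x l : R) * f (update (update x k (x k + 1)) l (x l - 1)))
        + ((∑ j, (x j : R) * q j) + p₀ * ((N : R) - ∑ i, (x i : R)) - (N : R)) * f x :=
  rfl

theorem recurrenceOp_pochProd {p₀ : R} {q : ι → R} (hpq : p₀ + ∑ k, q k = 1) (N : ℕ)
    (r x : ι → ℕ) :
    recurrenceOp p₀ q N x (pochProd r)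
      = -(∑ i, (r i : R)) * pochProd r x
        - ((N : R) + 1 - ∑ i, (r i : R))
          * ∑ k, q k * (r k * pochProd (update r k (r k - 1)) x) := by
  set P : R := pochProd r x
  set X : R := ∑ i, (x i : R)
  set T : R := ∑ i, (r i : R)
  have hdown : ∑ l, (x l : R) * pochProd r (update x l (x l - 1)) = (X - T) * P := by
    simp_rw [natCast_mul_pochProd_update_pred, ← sum_mul, sum_sub_distrib]
    rfl
  have hup : ∀ l, q l * ((N : R) - X) * pochProd r (update x l (x l + 1))
      = q l * ((N : R) - X) * (P - r l * pochProd (update r l (r l - 1)) x) := fun l => by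
    rw [pochProd_update_succ]
  have hmixed : ∀ k, ∑ l ∈ univ.erase k,
      q k * (x l : R) * pochProd r (update (update x k (x k + 1)) l (x l - 1))
        = q k * ((X - T) - ((x k : R) - r k)) * (P - r k * pochProd (update r k (r k - 1)) x) :=
    fun k => calc
      _ = ∑ l ∈ univ.erase k,
            q k * (((x l : R) - r l) * (P - r k * pochProd (update r k (r k - 1)) x)) :=
        sum_congr rfl fun l hl => by
          rw [mul_assoc, natCast_mul_pochProd_update_update (mem_erase.mp hl).1]
      _ = _ := by
        rw [← mul_sum, ← sum_mul, sum_sub_distrib, sum_erase_eq_sub (mem_univ k),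
          sum_erase_eq_sub (mem_univ k)]
        ring
  have hcoeff : ∑ l, q l * ((N : R) - X) * (P - r l * pochProd (update r l (r l - 1)) x)
      + ∑ k, q k * ((X - T) - ((x k : R) - r k)) * (P - r k * pochProd (update r k (r k - 1)) x)
      + (∑ k, (x k : R) * q k) * P
        = ((N : R) - T) * (∑ k, q k) * P
          - ((N : R) + 1 - T) * ∑ k, q k * (r k * pochProd (update r k (r k - 1)) x) := by
    rw [sum_mul, ← sum_add_distrib, ← sum_add_distrib, eq_sub_iff_add_eq, mul_sum, mul_sum, sum_mul,
      ← sum_add_distrib]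
    refine sum_congr rfl fun k _ => ?_
    linear_combination -q k * natCast_mul_pochProd_update_pred_mul (R := R) r x k
  rw [recurrenceOp_apply, hdown, sum_congr rfl fun l _ => hup l, sum_congr rfl fun k _ => hmixed k]
  linear_combination hcoeff + ((N : R) - T) * P * hpq

end Recurrence

section Entries

def rowSum {ι κ : Type*} [Fintype κ] (M : ι → κ → ℕ) (i : ι) : ℕ := ∑ j, M i j

def colSum {ι κ : Type*} [Fintype ι] (M : ι → κ → ℕ) (j : κ) : ℕ := ∑ i, M i j

def incEntry {ι κ : Type*} [DecidableEq ι] [DecidableEq κ] (M : ι → κ → ℕ) (k : ι) (j : κ) :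
    ι → κ → ℕ :=
  update M k (update (M k) j (M k j + 1))

theorem rowSum_incEntry {ι κ : Type*} [Fintype κ] [DecidableEq ι] [DecidableEq κ]
    (M : ι → κ → ℕ) (k : ι) (j : κ) :
    rowSum (incEntry M k j) = update (rowSum M) k (rowSum M k + 1) := by
  funext i
  rcases eq_or_ne i k with rfl | hi
  · rw [update_self, rowSum, rowSum, incEntry, update_self]
    exact sum_apply_update_eq_sum_add (g := fun _ n => n) rfl
  · rw [update_of_ne hi, rowSum, rowSum, incEntry, update_of_ne hi]

theorem colSum_incEntry {ι κ : Type*} [Fintype ι] [DecidableEq ι] [DecidableEq κ]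
    (M : ι → κ → ℕ) (k : ι) (j : κ) :
    colSum (incEntry M k j) = update (colSum M) j (colSum M j + 1) := by
  funext j'
  rcases eq_or_ne j' j with rfl | hj
  · rw [update_self]
    exact sum_apply_update_eq_sum_add (g := fun _ (row : κ → ℕ) => row j') (by simp)
  · rw [update_of_ne hj]
    exact (sum_apply_update_eq_sum_add (g := fun _ (row : κ → ℕ) => row j') (a := 0)
      (by simp [update_of_ne hj])).trans (add_zero _)

variable {ι κ : Type*} [Fintype ι] [Fintype κ]

def entrySum (M : ι → κ → ℕ) : ℕ := ∑ i, ∑ j, M i j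

variable (M : ι → κ → ℕ) (k : ι) (j : κ)

theorem entrySum_eq_sum_rowSum : entrySum M = ∑ i, rowSum M i := rfl

theorem entrySum_eq_sum_colSum : entrySum M = ∑ j, colSum M j := sum_comm

theorem le_entrySum : M k j ≤ entrySum M :=
  (single_le_sum (fun _ _ => Nat.zero_le _) (mem_univ j)).trans
    (single_le_sum (f := fun i => ∑ j, M i j) (fun _ _ => Nat.zero_le _) (mem_univ k))

theorem entrySum_incEntry [DecidableEq ι] [DecidableEq κ] :
    entrySum (incEntry M k j) = entrySum M + 1 := by
  rw [entrySum_eq_sum_rowSum, entrySum_eq_sum_rowSum, rowSum_incEntry]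
  exact sum_apply_update_eq_sum_add (g := fun _ n => n) rfl

end Entries

section Weight

variable {ι κ K : Type*} [Fintype ι] [Fintype κ] [Field K]

/-- No indicator `|M| ≤ N` is needed: for `|M| > N` the denominator `(-N)_{|M|}` vanishes and
`x / 0 = 0`. -/
noncomputable def weight (ω : ι → κ → K) (N : ℕ) (m : κ → ℕ) (M : ι → κ → ℕ) : K :=
  (∏ j, (ascPochhammer K (colSum M j)).eval (-(m j : K)))
      / (ascPochhammer K (entrySum M)).eval (-(N : K))
    * ∏ i, ∏ j, ω i j ^ M i j / ((M i j).factorial : K)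

variable (ω : ι → κ → K) (N : ℕ) (m : κ → ℕ) (M : ι → κ → ℕ)

theorem weight_eq_zero_of_lt_entrySum (h : N < entrySum M) : weight ω N m M = 0 := by
  rw [weight, ascPochhammer_eval_neg_coe_nat_of_lt h, div_zero, zero_mul]

theorem weight_eq_zero_of_lt_colSum {j : κ} (h : m j < colSum M j) : weight ω N m M = 0 := by
  rw [weight, prod_eq_zero (mem_univ j) (ascPochhammer_eval_neg_coe_nat_of_lt h), zero_div,
    zero_mul]

theorem weight_mul_sub_entrySum_eq_zero (hm : ∑ j, m j ≤ N) (hM : N ≤ entrySum M) :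
    weight ω N m M * ((∑ j, (m j : K)) - entrySum M) = 0 := by
  by_cases h : ∃ j, m j < colSum M j
  · obtain ⟨j, hj⟩ := h
    rw [weight_eq_zero_of_lt_colSum ω N m M hj, zero_mul]
  · push Not at h
    have : entrySum M = ∑ j, m j :=
      le_antisymm ((entrySum_eq_sum_colSum M).trans_le (sum_le_sum fun j _ => h j)) (hm.trans hM)
    rw [this, Nat.cast_sum, sub_self, mul_zero]

theorem weight_incEntry [CharZero K] [DecidableEq ι] [DecidableEq κ] (k : ι) (j : κ) :
    weight ω N m (incEntry M k j) = weight ω N m M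
      * ((colSum M j - (m j : K)) / (entrySum M - (N : K)) * (ω k j / (M k j + 1))) := by
  have hcol : ∏ j', (ascPochhammer K (update (colSum M) j (colSum M j + 1) j')).eval (-(m j' : K))
      = (∏ j', (ascPochhammer K (colSum M j')).eval (-(m j' : K))) * (-(m j : K) + colSum M j) :=
    prod_apply_update_eq_prod_mul (g := fun j' n => (ascPochhammer K n).eval (-(m j' : K)))
      (ascPochhammer_succ_eval _ _)
  have hentry : ∀ n : ℕ, ω k j ^ (n + 1) / ((n + 1).factorial : K)
      = ω k j ^ n / (n.factorial : K) * (ω k j / (n + 1)) := fun n => by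
    rw [Nat.factorial_succ, Nat.cast_mul, pow_succ]
    field_simp
    push_cast
    ring
  have hdiag : ∏ i, ∏ j', ω i j' ^ incEntry M k j i j' / ((incEntry M k j i j').factorial : K)
      = (∏ i, ∏ j', ω i j' ^ M i j' / ((M i j').factorial : K)) * (ω k j / (M k j + 1)) :=
    prod_apply_update_eq_prod_mul
      (g := fun i (row : κ → ℕ) => ∏ j', ω i j' ^ row j' / ((row j').factorial : K))
      (prod_apply_update_eq_prod_mul (g := fun j' n => ω k j' ^ n / (n.factorial : K))
        (hentry _))
  rw [weight, weight, colSum_incEntry, entrySum_incEntry, hcol, hdiag, ascPochhammer_succ_eval,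
    ← div_div]
  ring

theorem weight_incEntry_mul [CharZero K] [DecidableEq ι] [DecidableEq κ] (k : ι) (j : κ)
    (hM : entrySum M < N) (X : K) :
    weight ω N m (incEntry M k j) * (((N : K) + 1 - (entrySum M + 1 : ℕ)) * ((M k j + 1 : ℕ) * X))
      = ω k j * (weight ω N m M * (((m j : K) - colSum M j) * X)) := by
  have hMN : (entrySum M : K) - N ≠ 0 := sub_ne_zero.mpr (by exact_mod_cast hM.ne)
  have hMkj : (M k j : K) + 1 ≠ 0 := Nat.cast_add_one_ne_zero _
  rw [weight_incEntry]
  field_simp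
  push_cast
  ring

end Weight

section Reindex

variable {ι κ : Type*} [DecidableEq ι] [DecidableEq κ] {N : ℕ}

def natEntries (A : ι → κ → Fin (N + 1)) : ι → κ → ℕ := fun i j => A i j

theorem natEntries_add_single {A : ι → κ → Fin (N + 1)} {k : ι} {j : κ}
    (hA : (A k j : ℕ) < N) :
    natEntries (A + Pi.single k (Pi.single j 1)) = incEntry (natEntries A) k j := by
  funext i j'
  rcases eq_or_ne i k with rfl | hi
  · rcases eq_or_ne j' j with rfl | hj
    · simpa [natEntries, incEntry] using Fin.val_add_one_of_lt' (by omega)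
    · simp [natEntries, incEntry, hj]
  · simp [natEntries, incEntry, hi]

theorem natEntries_add_single_of_eq {A : ι → κ → Fin (N + 1)} {k : ι} {j : κ}
    (hA : (A k j : ℕ) = N) : natEntries (A + Pi.single k (Pi.single j 1)) k j = 0 := by
  have : A k j = Fin.last N := Fin.ext hA
  simp [natEntries, this]

variable [Fintype ι] [Fintype κ] {K : Type*} [Field K] [CharZero K]

theorem sum_weight_mul_entry (ω : ι → κ → K) (m : κ → ℕ) (F : (ι → ℕ) → K) (k : ι) (j : κ) :
    ∑ A : ι → κ → Fin (N + 1), weight ω N m (natEntries A)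
        * (((N : K) + 1 - entrySum (natEntries A)) * (natEntries A k j
          * F (update (rowSum (natEntries A)) k (rowSum (natEntries A) k - 1))))
      = ω k j * ∑ B : ι → κ → Fin (N + 1),
          if entrySum (natEntries B) < N then
            weight ω N m (natEntries B) * (((m j : K) - colSum (natEntries B) j)
              * F (rowSum (natEntries B)))
          else 0 := by
  -- Substitute `A = B + E_{kj}` (entries added modulo `N + 1`); the wrapped-around terms
  -- `B k j = N` vanish on both sides.
  rw [mul_sum, ← Equiv.sum_comp (Equiv.addRight (Pi.single k (Pi.single j 1)))]
  refine sum_congr rfl fun B _ => ?_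
  rw [Equiv.coe_addRight]
  rcases (Nat.lt_succ_iff.mp (B k j).isLt).lt_or_eq with hB | hB
  · have hkj : incEntry (natEntries B) k j k j = natEntries B k j + 1 := by simp [incEntry]
    rw [natEntries_add_single hB, rowSum_incEntry, entrySum_incEntry, update_idem, update_self,
      Nat.add_sub_cancel, update_eq_self, hkj]
    split_ifs with hM
    · exact weight_incEntry_mul ω N m _ k j hM _
    · rw [weight_eq_zero_of_lt_entrySum _ _ _ _ (by rw [entrySum_incEntry]; omega), zero_mul,
        mul_zero]
  · have hM : ¬ entrySum (natEntries B) < N :=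
      not_lt.mpr (hB.symm.trans_le (le_entrySum (natEntries B) k j))
    rw [natEntries_add_single_of_eq hB, if_neg hM]
    simp

theorem sum_weight_mul_rowSum {ω : ι → κ → K} {q : ι → K} (hω : ∀ j, ∑ k, q k * ω k j = 1)
    {m : κ → ℕ} (hm : ∑ j, m j ≤ N) (F : (ι → ℕ) → K) :
    ∑ A : ι → κ → Fin (N + 1), weight ω N m (natEntries A)
        * (((N : K) + 1 - entrySum (natEntries A)) * ∑ k, q k * (rowSum (natEntries A) k
          * F (update (rowSum (natEntries A)) k (rowSum (natEntries A) k - 1))))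
      = ∑ A : ι → κ → Fin (N + 1), weight ω N m (natEntries A)
          * (((∑ j, (m j : K)) - entrySum (natEntries A)) * F (rowSum (natEntries A))) := by
  set S : κ → K := fun j => ∑ B : ι → κ → Fin (N + 1),
    if entrySum (natEntries B) < N then
      weight ω N m (natEntries B) * (((m j : K) - colSum (natEntries B) j)
        * F (rowSum (natEntries B)))
    else 0
  have hrow : ∀ (M : ι → κ → ℕ) k, (rowSum M k : K) = ∑ j, (M k j : K) :=
    fun _ _ => Nat.cast_sum _ _
  calc _ = ∑ k, ∑ j, q k * ∑ A : ι → κ → Fin (N + 1), weight ω N m (natEntries A)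
          * (((N : K) + 1 - entrySum (natEntries A)) * (natEntries A k j
            * F (update (rowSum (natEntries A)) k (rowSum (natEntries A) k - 1)))) := by
        simp_rw [hrow, sum_mul, mul_sum]
        rw [sum_comm]
        refine sum_congr rfl fun k _ => ?_
        rw [sum_comm]
        exact sum_congr rfl fun j _ => sum_congr rfl fun A _ => by ring
    _ = ∑ k, ∑ j, q k * (ω k j * S j) := by simp_rw [sum_weight_mul_entry]; rfl
    _ = ∑ j, S j := by
        rw [sum_comm]
        simp_rw [← mul_assoc, ← sum_mul, hω, one_mul]
    _ = _ := by
        rw [sum_comm]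
        refine sum_congr rfl fun A _ => ?_
        split_ifs with hA
        · rw [← mul_sum, ← sum_mul, sum_sub_distrib, entrySum_eq_sum_colSum, Nat.cast_sum]
        · rw [sum_const_zero, ← mul_assoc,
            weight_mul_sub_entrySum_eq_zero ω N m _ hm (not_lt.mp hA), zero_mul]

theorem recurrenceOp_sum_weight_smul_pochProd {ω : ι → κ → K} {p₀ : K} {q : ι → K}
    (hpq : p₀ + ∑ k, q k = 1) (hω : ∀ j, ∑ k, q k * ω k j = 1) {m : κ → ℕ} (hm : ∑ j, m j ≤ N)
    (x : ι → ℕ) :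
    recurrenceOp p₀ q N x
        (∑ A : ι → κ → Fin (N + 1), weight ω N m (natEntries A) • pochProd (rowSum (natEntries A)))
      = -(∑ j, (m j : K)) * (∑ A : ι → κ → Fin (N + 1),
          weight ω N m (natEntries A) • pochProd (rowSum (natEntries A))) x := by
  have hrow : ∀ M : ι → κ → ℕ, ∑ i, (rowSum M i : K) = entrySum M := fun M => by
    rw [entrySum_eq_sum_rowSum, Nat.cast_sum]
  simp_rw [map_sum, map_smul, smul_eq_mul, recurrenceOp_pochProd hpq, hrow, Finset.sum_apply,
    Pi.smul_apply, smul_eq_mul, mul_sub, sum_sub_distrib,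
    sum_weight_mul_rowSum hω hm (fun r => pochProd r x), mul_sum, ← sum_sub_distrib]
  exact sum_congr rfl fun A _ => by ring

end Reindex

section Orthogonality

variable {n K : Type*} [Fintype n] [DecidableEq n] [Field K]

theorem vecMul_eq_single_of_smul_diagonal_mul_eq_one {ν : K} {p pt : n → K} {U : Matrix n n K}
    {i₀ : n} (hK : ν • (diagonal p * U * diagonal pt * Uᵀ) = 1) (hU : ∀ k, U k i₀ = 1)
    (hν : ν * pt i₀ = 1) : p ᵥ* U = Pi.single i₀ 1 := by
  have h : (ν • (diagonal pt * Uᵀ)) * (diagonal p * U) = 1 :=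
    mul_eq_one_comm.mp (by rw [Matrix.mul_smul, ← hK]; simp only [Matrix.mul_assoc])
  funext x
  have hx := congrFun (congrFun h i₀) x
  simp only [diagonal, Matrix.mul_apply, Matrix.smul_apply, of_apply, transpose_apply, ite_mul,
    zero_mul, sum_ite_eq, mem_univ, if_true, hU, mul_one, smul_eq_mul,
    Matrix.one_apply, hν, one_mul] at hx
  rw [vecMul, dotProduct, hx, Pi.single_apply]
  exact if_congr eq_comm rfl rfl

end Orthogonality

theorem kraw_eq_sum (d N : ℕ) (U : Matrix (Fin (d + 1)) (Fin (d + 1)) ℂ) (m : Fin d → ℕ) :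
    kraw d N U m = ∑ A : Fin d → Fin d → Fin (N + 1),
      weight (fun i j => 1 - U i.succ j.succ) N m (natEntries A)
        • pochProd (rowSum (natEntries A)) := by
  funext mt
  rw [kraw, Finset.sum_apply]
  refine sum_congr rfl fun A _ => ?_
  rw [Pi.smul_apply, smul_eq_mul]
  split_ifs with hA
  · simp only [weight, pochProd, rowSum, colSum, entrySum, natEntries]
    ring
  · rw [weight_eq_zero_of_lt_entrySum _ _ _ (natEntries A) (not_le.mp hA), zero_mul]

end Krawtchouk

theorem stmt_16_general (d : ℕ) (ν : ℂ) (hν : ν ≠ 0)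
    (p pt : Fin (d+1) → ℂ) (U : Matrix (Fin (d+1)) (Fin (d+1)) ℂ)
    (hpt0 : pt 0 = 1/ν)
    (hU : ∀ j, U 0 j = 1 ∧ U j 0 = 1)
    (hK : ν • (Matrix.diagonal p * U * Matrix.diagonal pt * U.transpose) = 1)
    (N : ℕ)
    (m mt : Fin d → ℕ) (hm : ∑ i, m i ≤ N) :
    -(∑ i, (m i : ℂ)) * kraw d N U m mt
      = p 0 * (∑ l, (mt l : ℂ) * kraw d N U m (Function.update mt l (mt l - 1)))
        + (∑ l, p l.succ * ((N : ℂ) - ∑ i, (mt i : ℂ))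
            * kraw d N U m (Function.update mt l (mt l + 1)))
        + (∑ k, ∑ l ∈ Finset.univ.erase k,
            p k.succ * (mt l : ℂ)
              * kraw d N U m
                  (Function.update (Function.update mt k (mt k + 1)) l (mt l - 1)))
        + ((∑ j, (mt j : ℂ) * p j.succ) + p 0 * ((N : ℂ) - ∑ i, (mt i : ℂ)) - (N : ℂ))
            * kraw d N U m mt := by
  have hpU : p ᵥ* U = Pi.single 0 1 :=
    Krawtchouk.vecMul_eq_single_of_smul_diagonal_mul_eq_one hK (fun k => (hU k).2)
      (by rw [hpt0, mul_one_div_cancel hν])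
  have hpq : p 0 + ∑ k : Fin d, p k.succ = 1 := by
    simpa [vecMul, dotProduct, hU, Fin.sum_univ_succ] using congrFun hpU 0
  have hω : ∀ j : Fin d, ∑ k : Fin d, p k.succ * (1 - U k.succ j.succ) = 1 := fun j => by
    have h := congrFun hpU j.succ
    simp only [vecMul, dotProduct, Fin.sum_univ_succ, hU, mul_one, ne_eq, Fin.succ_ne_zero,
      not_false_eq_true, Pi.single_eq_of_ne] at h
    simp only [mul_sub, mul_one, sum_sub_distrib]
    linear_combination hpq - h
  have h := Krawtchouk.recurrenceOp_sum_weight_smul_pochProd hpq hω hm mt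
  rw [← Krawtchouk.kraw_eq_sum] at h
  -- the right-hand side is `recurrenceOp (p 0) (p ∘ Fin.succ) N mt (kraw d N U m)` by definition
  exact h.symm

theorem stmt_16 (d : ℕ) (hd : 1 ≤ d) (ν : ℂ) (hν : ν ≠ 0)
    (p pt : Fin (d+1) → ℂ) (U : Matrix (Fin (d+1)) (Fin (d+1)) ℂ)
    (hp0 : p 0 = 1/ν) (hpt0 : pt 0 = 1/ν)
    (hU : ∀ j, U 0 j = 1 ∧ U j 0 = 1)
    (hK : ν • (Matrix.diagonal p * U * Matrix.diagonal pt * U.transpose) = 1)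
    (N : ℕ) (hN : 1 ≤ N)
    (m mt : Fin d → ℕ) (hm : ∑ i, m i ≤ N) (hmt : ∑ i, mt i ≤ N) :
    -(∑ i, (m i : ℂ)) * kraw d N U m mt
      = p 0 * (∑ l, (mt l : ℂ) * kraw d N U m (Function.update mt l (mt l - 1)))
        + (∑ l, p l.succ * ((N : ℂ) - ∑ i, (mt i : ℂ))
            * kraw d N U m (Function.update mt l (mt l + 1)))
        + (∑ k, ∑ l ∈ Finset.univ.erase k,
            p k.succ * (mt l : ℂ)
              * kraw d N U m
                  (Function.update (Function.update mt k (mt k + 1)) l (mt l - 1)))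
        + ((∑ j, (mt j : ℂ) * p j.succ) + p 0 * ((N : ℂ) - ∑ i, (mt i : ℂ)) - (N : ℂ))
            * kraw d N U m mt :=
  stmt_16_general d ν hν p pt U hpt0 hU hK N m mt hm
end

section
/- Fix an integer d ≥ 1 and nonzero complex numbers p_0, p_1, ..., p_d with p_0 + p_1 + ... + p_d = 1 such that 1 − ∑_{j=1}^{k} p_j ≠ 0 for every k = 1, ..., d. Define p̃_0 = p_0 and p̃_k = p_k p_0 / ((1 − ∑_{j=1}^{k} p_j)(1 − ∑_{j=1}^{k−1} p_j)) for k = 1,...,d, and let U = (u_{i,j})_{0≤i,j≤d} be given by u_{i,j} = δ_{0,i} when i < j, u_{i,j} = 1 when i > j, u_{0,0} = 1, and u_{i,i} = −(1 − ∑_{k=1}^{i} p_k)/p_i for i = 1,...,d. Then with ν = 1/p_0, P = diag(p_0,...,p_d), P̃ = diag(p̃_0,...,p̃_d), one has ν P U P̃ Uᵗ = I_{d+1}, i.e. (ν, P, P̃, U) ∈ K_d. -/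
open Matrix Finset

lemma stmt_18_aux (p0 q y : ℂ) (hy : y ≠ 0) (hq : q ≠ 0) (hyq : y + q ≠ 0) :
    p0 / (y + q) + -y / q * (q * p0 / (y * (y + q))) * (-y / q) = p0 / q := by
  have h1 : -y / q * (q * p0 / (y * (y + q))) * (-y / q) = y * p0 / (q * (y + q)) := by
    field_simp
  rw [h1, div_add_div _ _ hyq (mul_ne_zero hq hyq),
    div_eq_div_iff (mul_ne_zero hyq (mul_ne_zero hq hyq)) hq]
  ring

set_option maxHeartbeats 1600000 in
theorem stmt_18 (d : ℕ) (hd : 1 ≤ d) (p : ℕ → ℂ)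
    (hpne : ∀ j ≤ d, p j ≠ 0)
    (hpsum : ∑ j ∈ Finset.range (d+1), p j = 1)
    (S : ℕ → ℂ) (hS : ∀ k, S k = ∑ j ∈ Finset.Icc 1 k, p j)
    (hSne : ∀ k, 1 ≤ k → k ≤ d → 1 - S k ≠ 0)
    (pt : ℕ → ℂ) (hpt0 : pt 0 = p 0)
    (hptk : ∀ k, 1 ≤ k → k ≤ d → pt k = p k * p 0 / ((1 - S k) * (1 - S (k-1))))
    (U : Matrix (Fin (d+1)) (Fin (d+1)) ℂ)
    (hU : ∀ i j : Fin (d+1), U i j =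
      if (i : ℕ) < (j : ℕ) then (if (i : ℕ) = 0 then 1 else 0)
      else if (j : ℕ) < (i : ℕ) then 1
      else if (i : ℕ) = 0 then 1 else -(1 - S i) / p i)
    (ν : ℂ) (hν : ν = 1 / p 0)
    (P Pt : Matrix (Fin (d+1)) (Fin (d+1)) ℂ)
    (hP : P = Matrix.diagonal (fun i : Fin (d+1) => p i))
    (hPt : Pt = Matrix.diagonal (fun i : Fin (d+1) => pt i)) :
    ν • (P * U * Pt * U.transpose) = 1 := by
  -- basic facts about S
  have hS0 : S 0 = 0 := by simp [hS]
  have hSsucc : ∀ k, S (k+1) = S k + p (k+1) := by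
    intro k
    rw [hS, hS, Finset.sum_Icc_succ_top (by omega : 1 ≤ k + 1)]
  have hsplit : ∀ m, ∑ j ∈ Finset.range (m+1), p j = p 0 + S m := by
    intro m
    induction m with
    | zero => simp [hS0]
    | succ n ih => rw [Finset.sum_range_succ, ih, hSsucc]; ring
  have hSd : 1 - S d = p 0 := by
    have := hsplit d
    rw [hpsum] at this
    linear_combination this
  have hSne' : ∀ k, k ≤ d → 1 - S k ≠ 0 := by
    intro k hk
    rcases Nat.eq_zero_or_pos k with h | h
    · subst h; simp [hS0]
    · exact hSne k h hk
  -- partial sums of pt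
  have hA : ∀ m, m ≤ d → ∑ k ∈ Finset.range (m+1), pt k = p 0 / (1 - S m) := by
    intro m hm
    induction m with
    | zero => simp [hpt0, hS0]
    | succ n ih =>
      rw [Finset.sum_range_succ, ih (by omega),
        hptk (n+1) (by omega) hm]
      have h1 : 1 - S n ≠ 0 := hSne' n (by omega)
      have h2 : 1 - S (n+1) ≠ 0 := hSne' (n+1) hm
      have h3 : p (n+1) ≠ 0 := hpne (n+1) hm
      have h4 := hSsucc n
      simp only [Nat.add_sub_cancel]
      rw [h4] at h2 ⊢
      field_simp
      ring
  -- the entries of U as a function of natural numbers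
  set u : ℕ → ℕ → ℂ := fun a b =>
    if a < b then (if a = 0 then 1 else 0)
    else if b < a then 1
    else if a = 0 then 1 else -(1 - S a) / p a with hu_def
  have hUu : ∀ i j : Fin (d+1), U i j = u (i : ℕ) (j : ℕ) := by
    intro i j; rw [hU]
  have hu0 : ∀ k, u 0 k = 1 := by
    intro k; simp only [hu_def]; split_ifs <;> simp_all
  have hu_lt : ∀ a k, k < a → u a k = 1 := by
    intro a k h; simp only [hu_def]
    rw [if_neg (by omega), if_pos h]
  have hu_gt : ∀ a k, 1 ≤ a → a < k → u a k = 0 := by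
    intro a k h1 h2; simp only [hu_def]
    rw [if_pos h2, if_neg (by omega)]
  have hu_diag : ∀ a, 1 ≤ a → u a a = -(1 - S a) / p a := by
    intro a h; simp only [hu_def]
    rw [if_neg (by omega), if_neg (by omega), if_neg (by omega)]
  -- key computation
  have hsum : ∀ a b : ℕ, a ≤ b → b ≤ d →
      ∑ k ∈ Finset.range (d+1), u a k * pt k * u b k
        = if a = b then p 0 / p a else 0 := by
    intro a b hab hbd
    rcases Nat.eq_zero_or_pos a with ha0 | ha1
    · subst ha0
      rcases Nat.eq_zero_or_pos b with hb0 | hb1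
      · subst hb0
        simp only [hu0, one_mul, mul_one, eq_self_iff_true, if_true]
        rw [hA d le_rfl, hSd]
      · -- a = 0 < b
        rw [if_neg (by omega)]
        obtain ⟨c, rfl⟩ : ∃ c, b = c + 1 := ⟨b - 1, by omega⟩
        have hrestrict : ∑ k ∈ Finset.range (d+1), u 0 k * pt k * u (c+1) k
            = ∑ k ∈ Finset.range (c+2), u 0 k * pt k * u (c+1) k := by
          refine (Finset.sum_subset (Finset.range_subset_range.mpr (by omega)) ?_).symm
          intro x _ hx
          rw [hu_gt (c+1) x (by omega) (by simp at hx; omega)]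
          ring
        rw [hrestrict, Finset.sum_range_succ]
        have hmain : ∑ k ∈ Finset.range (c+1), u 0 k * pt k * u (c+1) k
            = p 0 / (1 - S c) := by
          rw [← hA c (by omega)]
          refine Finset.sum_congr rfl ?_
          intro x hx
          simp at hx
          rw [hu0, hu_lt (c+1) x (by omega)]
          ring
        rw [hmain, hu0, hu_diag (c+1) (by omega), hptk (c+1) (by omega) hbd]
        simp only [Nat.add_sub_cancel]
        have h1 : 1 - S c ≠ 0 := hSne' c (by omega)
        have h2 : 1 - S (c+1) ≠ 0 := hSne' (c+1) hbd
        have h3 : p (c+1) ≠ 0 := hpne (c+1) hbd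
        field_simp
        ring
    · -- 1 ≤ a
      obtain ⟨c, rfl⟩ : ∃ c, a = c + 1 := ⟨a - 1, by omega⟩
      have hrestrict : ∑ k ∈ Finset.range (d+1), u (c+1) k * pt k * u b k
          = ∑ k ∈ Finset.range (c+2), u (c+1) k * pt k * u b k := by
        refine (Finset.sum_subset (Finset.range_subset_range.mpr (by omega)) ?_).symm
        intro x _ hx
        rw [hu_gt (c+1) x (by omega) (by simp at hx; omega)]
        ring
      rw [hrestrict, Finset.sum_range_succ]
      have hmain : ∑ k ∈ Finset.range (c+1), u (c+1) k * pt k * u b k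
          = p 0 / (1 - S c) := by
        rw [← hA c (by omega)]
        refine Finset.sum_congr rfl ?_
        intro x hx
        simp at hx
        rw [hu_lt (c+1) x (by omega), hu_lt b x (by omega)]
        ring
      have h1 : 1 - S c ≠ 0 := hSne' c (by omega)
      have h2 : 1 - S (c+1) ≠ 0 := hSne' (c+1) (by omega)
      have h3 : p (c+1) ≠ 0 := hpne (c+1) (by omega)
      have h4 := hSsucc c
      rw [hmain, hu_diag (c+1) (by omega), hptk (c+1) (by omega) (by omega)]
      simp only [Nat.add_sub_cancel]
      rcases eq_or_lt_of_le hab with heq | hlt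
      · rw [if_pos heq, ← heq, hu_diag (c+1) (by omega)]
        have h5 : 1 - S c = 1 - S (c+1) + p (c+1) := by rw [h4]; ring
        rw [h5]
        exact stmt_18_aux (p 0) (p (c+1)) (1 - S (c+1)) h2 h3 (by rw [← h5]; exact h1)
      · rw [if_neg (by omega), hu_lt b (c+1) hlt]
        field_simp
        ring
  -- entries of the product
  have hentry : ∀ i j : Fin (d+1), (P * U * Pt * U.transpose) i j
      = p (i : ℕ) * ∑ k ∈ Finset.range (d+1), u (i : ℕ) k * pt k * u (j : ℕ) k := by
    intro i j
    rw [hP, hPt]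
    rw [Matrix.mul_apply]
    have : ∀ k : Fin (d+1),
        (Matrix.diagonal (fun i : Fin (d+1) => p i) * U *
          Matrix.diagonal (fun i : Fin (d+1) => pt i)) i k * U.transpose k j
        = p (i : ℕ) * (u (i : ℕ) (k : ℕ) * pt (k : ℕ) * u (j : ℕ) (k : ℕ)) := by
      intro k
      rw [Matrix.mul_diagonal, Matrix.diagonal_mul, Matrix.transpose_apply, hUu, hUu]
      ring
    rw [Finset.sum_congr rfl (fun k _ => this k), ← Finset.mul_sum]
    congr 1
    exact Fin.sum_univ_eq_sum_range (fun k => u (i : ℕ) k * pt k * u (j : ℕ) k) (d+1)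
  -- finish
  ext i j
  rw [Matrix.smul_apply, hentry, Matrix.one_apply, smul_eq_mul]
  have hij : (i : ℕ) ≤ d := by omega
  have hji : (j : ℕ) ≤ d := by omega
  have hp0 : p 0 ≠ 0 := hpne 0 (by omega)
  have hpi : p (i : ℕ) ≠ 0 := hpne _ hij
  rcases le_or_gt (i : ℕ) (j : ℕ) with h | h
  · rw [hsum _ _ h hji]
    by_cases hij' : (i : ℕ) = (j : ℕ)
    · have hfin : i = j := Fin.ext hij'
      subst hfin
      rw [if_pos rfl, if_pos rfl, hν]
      field_simp
    · have hfin : i ≠ j := fun hc => hij' (by rw [hc])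
      rw [if_neg hij', if_neg hfin]
      ring
  · have hcomm : ∑ k ∈ Finset.range (d+1), u (i : ℕ) k * pt k * u (j : ℕ) k
        = ∑ k ∈ Finset.range (d+1), u (j : ℕ) k * pt k * u (i : ℕ) k :=
      Finset.sum_congr rfl (fun k _ => by ring)
    have hfin : i ≠ j := fun hc => by subst hc; omega
    rw [hcomm, hsum _ _ (le_of_lt h) hij, if_neg (by omega), if_neg hfin]
    ring
end
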